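/- arXiv:2105.09541 — 10 statements merged into one kernel-verified Lean document; each statement's English description precedes it below -/
import Mathlib

section
/- Let ℓ,k ∈ ℤ with ℓ ≠ 0 and ℓ dividing k(k−1). Then for all a_1,…,a_n ∈ ℤ, the iterated product a_1 ⋆_{ℓ,k} ⋯ ⋆_{ℓ,k} a_n equals Σ_{j=1}^{n} ℓ^{j−1} k^{n−j} e_j(a_1,…,a_n) + (k^n − k)/ℓ, where e_j is the j-th elementary symmetric polynomial; i.e. the iterated ⋆_{ℓ,k}-product of a_1,…,a_n equals 𝔖_{ℓ,k}(a_1,…,a_n). -/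
/-- The operation a ⋆_{ℓ,k} b = ℓab + k(a+b) + k(k−1)/ℓ. -/
def starOp (l k a b : ℤ) : ℤ := l * a * b + k * (a + b) + k * (k - 1) / l

/-- The iterated ⋆_{ℓ,k}-product a₀ ⋆ a₁ ⋆ ⋯ ⋆ aₙ of a : Fin (n+1) → ℤ. -/
def iterStar (l k : ℤ) (n : ℕ) (a : Fin (n + 1) → ℤ) : ℤ :=
  List.foldl (starOp l k) (a 0) (List.ofFn fun i : Fin n => a i.succ)

/-- The j-th elementary symmetric polynomial e_j(a₁,…,a_N), evaluated. -/
def esymmVal (N : ℕ) (j : ℕ) (a : Fin N → ℤ) : ℤ :=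
  ∑ G ∈ Finset.powersetCard j (Finset.univ : Finset (Fin N)), ∏ i ∈ G, a i

lemma starOp_key (l k : ℤ) (hdvd : l ∣ k * (k - 1)) (a b : ℤ) :
    l * starOp l k a b + k = (l * a + k) * (l * b + k) := by
  have h : l * (k * (k - 1) / l) = k * (k - 1) := Int.mul_ediv_cancel' hdvd
  unfold starOp
  have : l * (l * a * b + k * (a + b) + k * (k - 1) / l) + k
      = l * (l * a * b + k * (a + b)) + l * (k * (k - 1) / l) + k := by ring
  rw [this, h]; ring

lemma foldl_key (l k : ℤ) (hdvd : l ∣ k * (k - 1)) :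
    ∀ (L : List ℤ) (init : ℤ),
      l * List.foldl (starOp l k) init L + k
        = (l * init + k) * (L.map (fun x => l * x + k)).prod := by
  intro L
  induction L with
  | nil => intro init; simp
  | cons x xs ih =>
      intro init
      simp only [List.foldl_cons, List.map_cons, List.prod_cons]
      rw [ih, starOp_key l k hdvd, mul_assoc]

lemma prod_expand (l k : ℤ) (N : ℕ) (a : Fin N → ℤ) :
    ∏ i : Fin N, (l * a i + k)
      = ∑ j ∈ Finset.range (N + 1), l ^ j * k ^ (N - j) * esymmVal N j a := by
  classical
  rw [Finset.prod_add]
  rw [← Finset.sum_fiberwise_of_maps_to (g := fun t : Finset (Fin N) => t.card)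
      (fun t ht => by
        rw [Finset.mem_range, Nat.lt_succ_iff]
        simpa using Finset.card_le_card (Finset.mem_powerset.1 ht))]
  refine Finset.sum_congr rfl fun j hj => ?_
  rw [esymmVal, Finset.mul_sum, Finset.powersetCard_eq_filter]
  refine Finset.sum_congr rfl fun t ht => ?_
  rw [Finset.mem_filter] at ht
  rw [Finset.prod_mul_distrib, Finset.prod_const, Finset.prod_const, ht.2,
    Finset.card_sdiff_of_subset (Finset.subset_univ t), Finset.card_univ, Fintype.card_fin, ht.2]
  ring

/-- For ℓ,k ∈ ℤ with ℓ ≠ 0 and ℓ ∣ k(k−1), the iterated ⋆_{ℓ,k}-product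
of a₁,…,aₙ equals 𝔖_{ℓ,k}(a₁,…,aₙ) = Σ_{j=1}^{n} ℓ^{j−1} k^{n−j} e_j(a₁,…,aₙ) + (kⁿ−k)/ℓ. -/
theorem iterStar_eq_symmetric_poly (l k : ℤ) (hl : l ≠ 0) (hdvd : l ∣ k * (k - 1))
    (n : ℕ) (a : Fin (n + 1) → ℤ) :
    iterStar l k n a =
      (∑ j ∈ Finset.Icc 1 (n + 1), l ^ (j - 1) * k ^ (n + 1 - j) * esymmVal (n + 1) j a)
        + (k ^ (n + 1) - k) / l := by
  have hkey : l * iterStar l k n a + k = ∏ i : Fin (n + 1), (l * a i + k) := by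
    rw [iterStar, foldl_key l k hdvd, List.map_ofFn, Fin.prod_univ_succ]
    congr 1
    rw [← List.prod_ofFn]
    rfl
  have hdvd2 : l ∣ k ^ (n + 1) - k := by
    refine hdvd.trans ?_
    have h := sub_dvd_pow_sub_pow k 1 n
    rw [one_pow] at h
    have h2 : k ^ (n + 1) - k = k * (k ^ n - 1) := by ring
    rw [h2]
    exact mul_dvd_mul_left k h
  have he0 : esymmVal (n + 1) 0 a = 1 := by simp [esymmVal]
  have hsplit : Finset.range (n + 2) = insert 0 (Finset.Icc 1 (n + 1)) := by
    ext j; simp; omega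
  have hprod : ∏ i : Fin (n + 1), (l * a i + k)
      = k ^ (n + 1) + ∑ j ∈ Finset.Icc 1 (n + 1),
          l ^ j * k ^ (n + 1 - j) * esymmVal (n + 1) j a := by
    rw [prod_expand, hsplit, Finset.sum_insert (by simp)]
    simp [he0]
  have hsum : ∑ j ∈ Finset.Icc 1 (n + 1),
        l * (l ^ (j - 1) * k ^ (n + 1 - j) * esymmVal (n + 1) j a)
      = ∑ j ∈ Finset.Icc 1 (n + 1), l ^ j * k ^ (n + 1 - j) * esymmVal (n + 1) j a := by
    refine Finset.sum_congr rfl fun j hj => ?_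
    rw [Finset.mem_Icc] at hj
    have hpow : l * l ^ (j - 1) = l ^ j := by
      rw [← pow_succ']
      congr 1
      omega
    rw [← mul_assoc, ← mul_assoc, hpow]
  apply mul_left_cancel₀ hl
  rw [mul_add, Int.mul_ediv_cancel' hdvd2, Finset.mul_sum]
  linarith [hkey, hprod, hsum]
end

section
/- Let ℓ,k ∈ ℤ with ℓ ≠ 0 and ℓ dividing k(k−1). The semigroup (ℤ, ⋆_{ℓ,k}) contains a zero element z (an element with z ⋆_{ℓ,k} a = a ⋆_{ℓ,k} z = z for all a ∈ ℤ) if and only if ℓ divides k, in which case z = −k/ℓ. -/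
lemma starOp_zero_aux (l k z : ℤ)
    (hz : ∀ a : ℤ, starOp l k z a = z ∧ starOp l k a z = z) : l * z + k = 0 := by
  have h0 := (hz 0).1
  have h1 := (hz 1).1
  simp only [starOp] at h0 h1
  linarith

/-- For ℓ,k ∈ ℤ with ℓ ≠ 0 and ℓ ∣ k(k−1), the semigroup (ℤ, ⋆_{ℓ,k})
has a zero element iff ℓ ∣ k, in which case the zero is z = −k/ℓ (i.e. ℓz + k = 0). -/
theorem starOp_zero_iff (l k : ℤ) (hl : l ≠ 0) (hdvd : l ∣ k * (k - 1)) :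
    ((∃ z : ℤ, ∀ a : ℤ, starOp l k z a = z ∧ starOp l k a z = z) ↔ l ∣ k) ∧
    (∀ z : ℤ, (∀ a : ℤ, starOp l k z a = z ∧ starOp l k a z = z) → l * z + k = 0) := by
  refine ⟨⟨?_, ?_⟩, fun z hz => starOp_zero_aux l k z hz⟩
  · rintro ⟨z, hz⟩
    have h := starOp_zero_aux l k z hz
    exact ⟨-z, by linarith⟩
  · rintro ⟨m, hm⟩
    refine ⟨-m, fun a => ?_⟩
    have hc : k * (k - 1) / l = m * (k - 1) := by
      rw [hm, mul_assoc, Int.mul_ediv_cancel_left _ hl]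
    subst hm
    constructor <;> · simp only [starOp, hc]; ring
end

section
/- Let ℓ,k ∈ ℤ with ℓ ≠ 0 and ℓ dividing k(k−1). The semigroup (ℤ, ⋆_{ℓ,k}) contains an identity element u (an element with u ⋆_{ℓ,k} a = a ⋆_{ℓ,k} u = a for all a ∈ ℤ) if and only if ℓ divides k−1, in which case u = −(k−1)/ℓ. -/
lemma id_imp (l k : ℤ) (hl : l ≠ 0) (hdvd : l ∣ k * (k - 1)) (u : ℤ)
    (hu : ∀ a : ℤ, starOp l k u a = a ∧ starOp l k a u = a) : l * u + k = 1 := by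
  have h0 := (hu 0).1
  have h1 := (hu 1).1
  have k0 := starOp_key l k hdvd u 0
  have k1 := starOp_key l k hdvd u 1
  rw [h0] at k0
  rw [h1] at k1
  -- k0 : l*0 + k = (l*u+k)*(l*0+k), k1 : l*1+k = (l*u+k)*(l*1+k)
  by_contra hne
  have e0 : (l * u + k - 1) * k = 0 := by linear_combination -k0
  have e1 : (l * u + k - 1) * (l + k) = 0 := by linear_combination -k1
  have h1' : l * u + k - 1 ≠ 0 := fun h => hne (by linarith)
  have hk : k = 0 := by
    rcases mul_eq_zero.mp e0 with h | h
    · exact absurd h h1'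
    · exact h
  have hlk : l + k = 0 := by
    rcases mul_eq_zero.mp e1 with h | h
    · exact absurd h h1'
    · exact h
  exact hl (by linarith)

/-- For ℓ,k ∈ ℤ with ℓ ≠ 0 and ℓ ∣ k(k−1), the semigroup (ℤ, ⋆_{ℓ,k})
has an identity element iff ℓ ∣ k−1, in which case the identity is u = −(k−1)/ℓ
(i.e. ℓu + k = 1). -/
theorem starOp_identity_iff (l k : ℤ) (hl : l ≠ 0) (hdvd : l ∣ k * (k - 1)) :
    ((∃ u : ℤ, ∀ a : ℤ, starOp l k u a = a ∧ starOp l k a u = a) ↔ l ∣ (k - 1)) ∧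
    (∀ u : ℤ, (∀ a : ℤ, starOp l k u a = a ∧ starOp l k a u = a) → l * u + k = 1) := by
  constructor
  · constructor
    · rintro ⟨u, hu⟩
      have := id_imp l k hl hdvd u hu
      exact ⟨-u, by linarith⟩
    · rintro ⟨c, hc⟩
      refine ⟨-c, fun a => ?_⟩
      have hu1 : l * (-c) + k = 1 := by linarith
      have key1 := starOp_key l k hdvd (-c) a
      have key2 := starOp_key l k hdvd a (-c)
      rw [hu1] at key1 key2
      constructor
      · have : l * starOp l k (-c) a = l * a := by linarith
        exact mul_left_cancel₀ hl this
      · have : l * starOp l k a (-c) = l * a := by linarith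
        exact mul_left_cancel₀ hl this
  · exact id_imp l k hl hdvd
end

section
/- Let ℓ,k ∈ ℤ with ℓ ≠ 0 and ℓ dividing k(k−1). For every injective sequence of integers (x_n)_{n=1}^∞ and every finite coloring 𝔖_{ℓ,k}(x_n)_{n=1}^∞ = C_1 ∪ … ∪ C_r of the corresponding (ℓ,k)-symmetric system, there exist an injective sequence of integers (y_n)_{n=1}^∞ and a color C_i such that 𝔖_{ℓ,k}(y_n)_{n=1}^∞ ⊆ C_i. In particular, for every finite coloring ℤ = C_1 ∪ … ∪ C_r there exist an injective sequence (x_n)_{n=1}^∞ of integers and a color C_i with 𝔖_{ℓ,k}(x_n)_{n=1}^∞ ⊆ C_i. -/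
/-- The value of the (ℓ,k)-symmetric polynomial 𝔖_{ℓ,k} on the family (x i)_{i ∈ F}:
𝔖_{ℓ,k} = Σ_{∅≠G⊆F} ℓ^{|G|−1} k^{|F|−|G|} ∏_{i∈G} x i + (k^{|F|} − k)/ℓ. -/
def symVal (l k : ℤ) (x : ℕ → ℤ) (F : Finset ℕ) : ℤ :=
  (∑ G ∈ F.powerset.filter (fun G => G ≠ ∅),
      l ^ (G.card - 1) * k ^ (F.card - G.card) * ∏ i ∈ G, x i)
    + (k ^ F.card - k) / l

/-- The (ℓ,k)-symmetric system of a sequence: all values 𝔖_{ℓ,k}(x_{n₁},…,x_{n_s})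
with n₁ < … < n_s. -/
def symSystem (l k : ℤ) (x : ℕ → ℤ) : Set ℤ :=
  {z : ℤ | ∃ F : Finset ℕ, F.Nonempty ∧ symVal l k x F = z}

/-!
Since `ℓ ∣ k(k-1)`, the affine map `z ↦ ℓz + k` sends `𝔖_{ℓ,k}(x_n)` onto the set of finite
products of the sequence `ℓx_n + k`. A colouring of the symmetric system is thus a colouring of an
FP-set, and Hindman's theorem yields a sequence `b` all of whose finite products get one colour.
To pull `b` back to an injective sequence, first discard the finitely many `n` with
`|ℓx_n + k| ≤ 1`, so that all finite products have absolute value at least 2, and then replace `b`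
by its products over consecutive blocks, each block longer than the product of everything before
it: these block products strictly increase in absolute value, and their finite products are finite
products of `b`.
-/

namespace Hindman

variable {M : Type*}

theorem mem_FP_iff_exists_finsetProd [CommMonoid M] {a : ℕ → M} {m : M} :
    m ∈ FP a ↔ ∃ s : Finset ℕ, s.Nonempty ∧ ∏ i ∈ s, a i = m := by
  refine ⟨fun hm => ?_, fun ⟨s, hs, hm⟩ => hm ▸ FP.finsetProd a s hs⟩
  induction hm with
  | head' a => exact ⟨{0}, Finset.singleton_nonempty 0, Finset.prod_singleton _ _⟩
  | tail' a m _ ih =>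
    obtain ⟨s, hs, rfl⟩ := ih
    exact ⟨s.map (addRightEmbedding 1), hs.map, Finset.prod_map _ _ _⟩
  | cons' a m _ ih =>
    obtain ⟨s, -, rfl⟩ := ih
    refine ⟨insert 0 (s.map (addRightEmbedding 1)), Finset.insert_nonempty _ _, ?_⟩
    change ∏ i ∈ insert 0 _, a.get i = a.get 0 * ∏ i ∈ s, a.get (i + 1)
    rw [Finset.prod_insert (by simp), Finset.prod_map]
    rfl

theorem FP_subset_of_forall_mem [Semigroup M] {S : Set M} (hS : ∀ x ∈ S, ∀ y ∈ S, x * y ∈ S)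
    {a : ℕ → M} (ha : ∀ n, a n ∈ S) : FP a ⊆ S := by
  intro m hm
  induction hm with
  | head' a => exact ha 0
  | tail' a m _ ih => exact ih fun n => ha (n + 1)
  | cons' a m _ ih => exact hS _ (ha 0) _ (ih fun n => ha (n + 1))

end Hindman

section Blocks

variable {M : Type*} [CommMonoid M]

def blockProd (a : ℕ → M) (s : ℕ → ℕ) (m : ℕ) : M :=
  ∏ i ∈ Finset.Ico (s m) (s (m + 1)), a i

theorem Hindman.FP_blockProd_subset (a : ℕ → M) {s : ℕ → ℕ} (hs : StrictMono s) :
    FP (blockProd a s) ⊆ FP a := by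
  intro w hw
  obtain ⟨F, ⟨m, hm⟩, rfl⟩ := mem_FP_iff_exists_finsetProd.1 hw
  have hdisj : (F : Set ℕ).PairwiseDisjoint fun m => Finset.Ico (s m) (s (m + 1)) := by
    intro m _ n _ hmn
    simp only [Function.onFun, Finset.disjoint_left, Finset.mem_Ico]
    rcases hmn.lt_or_gt with h | h
    · have := hs.monotone (show m + 1 ≤ n from h); omega
    · have := hs.monotone (show n + 1 ≤ m from h); omega
  simp only [blockProd]
  rw [← Finset.prod_biUnion hdisj]
  exact FP.finsetProd a _ ⟨s m, Finset.mem_biUnion.2 ⟨m, hm, by simp [hs (Nat.lt_succ_self m)]⟩⟩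

end Blocks

def growingBlockEnds (c : ℕ → ℕ) (m : ℕ) : ℕ :=
  (fun t => t + 1 + ∏ i ∈ Finset.range t, c i)^[m] 0

theorem growingBlockEnds_succ (c : ℕ → ℕ) (m : ℕ) :
    growingBlockEnds c (m + 1) =
      growingBlockEnds c m + 1 + ∏ i ∈ Finset.range (growingBlockEnds c m), c i :=
  Function.iterate_succ_apply' _ _ _

theorem strictMono_growingBlockEnds (c : ℕ → ℕ) : StrictMono (growingBlockEnds c) :=
  strictMono_nat_of_lt_succ fun m => by rw [growingBlockEnds_succ]; omega

theorem strictMono_blockProd_growingBlockEnds {c : ℕ → ℕ} (hc : ∀ n, 2 ≤ c n) :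
    StrictMono (blockProd c (growingBlockEnds c)) := by
  refine strictMono_nat_of_lt_succ fun m => ?_
  set s := growingBlockEnds c with hs
  have hprefix : blockProd c s m ≤ ∏ i ∈ Finset.range (s (m + 1)), c i :=
    Finset.prod_le_prod_of_subset_of_one_le' (fun i hi => by
      simp only [Finset.mem_Ico, Finset.mem_range] at hi ⊢; omega)
      fun i _ _ => by linarith [hc i]
  have hlong : 2 ^ (s (m + 2) - s (m + 1)) ≤ blockProd c s (m + 1) := by
    simpa [blockProd] using
      Finset.pow_card_le_prod (Finset.Ico (s (m + 1)) (s (m + 2))) c 2 fun i _ => hc i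
  have hlen : s (m + 2) - s (m + 1) = 1 + ∏ i ∈ Finset.range (s (m + 1)), c i := by
    have h := growingBlockEnds_succ c (m + 1)
    rw [show m + 1 + 1 = m + 2 from rfl, ← hs] at h
    omega
  calc blockProd c s m ≤ ∏ i ∈ Finset.range (s (m + 1)), c i := hprefix
    _ < 2 ^ (s (m + 2) - s (m + 1)) := hlen ▸ Nat.lt_two_pow_self.trans (Nat.pow_lt_pow_right
      (by norm_num) (by omega))
    _ ≤ blockProd c s (m + 1) := hlong

theorem Int.exists_injective_FP_subset {b : ℕ → ℤ} (hb : ∀ n, 2 ≤ (b n).natAbs) :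
    ∃ v : ℕ → ℤ, Function.Injective v ∧ Hindman.FP v ⊆ Hindman.FP b := by
  set s := growingBlockEnds fun n => (b n).natAbs
  refine ⟨blockProd b s, ?_, Hindman.FP_blockProd_subset b (strictMono_growingBlockEnds _)⟩
  have hnatAbs : Int.natAbs ∘ blockProd b s = blockProd (fun n => (b n).natAbs) s :=
    funext fun _ => map_prod Int.natAbsHom _ _
  exact Function.Injective.of_comp (f := Int.natAbs)
    (hnatAbs ▸ (strictMono_blockProd_growingBlockEnds hb).injective)

theorem dvd_pow_sub_self {R : Type*} [CommRing R] {l k : R} (h : l ∣ k * (k - 1)) {n : ℕ}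
    (hn : n ≠ 0) : l ∣ k ^ n - k := by
  obtain ⟨n, rfl⟩ := Nat.exists_eq_succ_of_ne_zero hn
  refine h.trans ?_
  rw [show k ^ (n + 1) - k = k * (k ^ n - 1) by ring]
  exact mul_dvd_mul_left k (sub_one_dvd_pow_sub_one k n)

section SymmetricSystem

variable {l k : ℤ}

theorem mul_symVal_add (hdvd : l ∣ k * (k - 1)) (x : ℕ → ℤ) {F : Finset ℕ} (hF : F.Nonempty) :
    l * symVal l k x F + k = ∏ i ∈ F, (l * x i + k) := by
  rw [Finset.prod_add, ← Finset.add_sum_erase _ _ (Finset.empty_mem_powerset F)]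
  simp only [symVal, Finset.filter_ne', mul_add,
    Int.mul_ediv_cancel' (dvd_pow_sub_self hdvd hF.card_pos.ne'), Finset.mul_sum]
  rw [Finset.prod_empty, Finset.sdiff_empty, Finset.prod_const, one_mul, add_assoc,
    sub_add_cancel, add_comm]
  congr 1
  refine Finset.sum_congr rfl fun G hG => ?_
  obtain ⟨hG, hGF⟩ := Finset.mem_erase.1 hG
  obtain ⟨n, hn⟩ := Nat.exists_eq_succ_of_ne_zero (Finset.card_ne_zero.2
    (Finset.nonempty_iff_ne_empty.2 hG))
  rw [Finset.prod_mul_distrib, Finset.prod_const, Finset.prod_const,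
    Finset.card_sdiff_of_subset (Finset.mem_powerset.1 hGF), hn, Nat.succ_sub_one, pow_succ]
  ring

theorem image_symSystem (hdvd : l ∣ k * (k - 1)) (x : ℕ → ℤ) :
    (fun z => l * z + k) '' symSystem l k x = Hindman.FP fun n => l * x n + k := by
  ext w
  rw [Hindman.mem_FP_iff_exists_finsetProd]
  constructor
  · rintro ⟨_, ⟨F, hF, rfl⟩, rfl⟩
    exact ⟨F, hF, (mul_symVal_add hdvd x hF).symm⟩
  · rintro ⟨F, hF, rfl⟩
    exact ⟨_, ⟨F, hF, rfl⟩, mul_symVal_add hdvd x hF⟩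

theorem exists_injective_symSystem_subset (hl : l ≠ 0) (hdvd : l ∣ k * (k - 1)) {x : ℕ → ℤ}
    (hx : Function.Injective x) {r : ℕ} (C : Fin r → Set ℤ) (hC : symSystem l k x ⊆ ⋃ i, C i) :
    ∃ y : ℕ → ℤ, Function.Injective y ∧ ∃ i, symSystem l k y ⊆ C i := by
  set φ : ℤ → ℤ := fun z => l * z + k
  have hφ : Function.Injective φ := fun z w h => mul_left_cancel₀ hl (add_right_cancel h)
  obtain ⟨N, hN⟩ : ∃ N, ∀ n ≥ N, 2 ≤ (φ (x n)).natAbs := by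
    obtain ⟨N, hN⟩ := ((Set.finite_Ioo (-2 : ℤ) 2).preimage (hφ.comp hx).injOn).bddAbove
    refine ⟨N + 1, fun n hn => ?_⟩
    by_contra h
    have hn' : n ∈ (φ ∘ x) ⁻¹' Set.Ioo (-2) 2 := by
      simp only [Set.mem_preimage, Set.mem_Ioo, Function.comp_apply]; omega
    exact absurd (hN hn') (by omega)
  set a : ℕ → ℤ := fun n => φ (x (n + N))
  have haFP : Hindman.FP a ⊆ φ '' symSystem l k x := by
    rw [image_symSystem hdvd]; exact Hindman.FP_drop_subset_FP (fun n => φ (x n)) N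
  have ha2 : Hindman.FP a ⊆ {m | 2 ≤ m.natAbs} :=
    Hindman.FP_subset_of_forall_mem (fun m hm m' hm' => by
      simp only [Set.mem_ofPred_eq, Int.natAbs_mul] at hm hm' ⊢; nlinarith)
      fun n => hN _ (Nat.le_add_left N n)
  have hcover : Hindman.FP a ⊆ ⋃₀ Set.range fun i => φ '' C i ∩ Hindman.FP a := by
    intro w hw
    obtain ⟨z, hz, rfl⟩ := haFP hw
    obtain ⟨i, hi⟩ := Set.mem_iUnion.1 (hC hz)
    exact ⟨_, ⟨i, rfl⟩, ⟨z, hi, rfl⟩, hw⟩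
  obtain ⟨_, ⟨i, rfl⟩, b, hb⟩ := Hindman.FP_partition_regular a _ (Set.finite_range _) hcover
  obtain ⟨v, hv, hvb⟩ :=
    Int.exists_injective_FP_subset fun n => ha2 (hb (Hindman.FP.singleton b n)).2
  choose y hyC hyv using fun n => (hb (hvb (Hindman.FP.singleton v n))).1
  replace hyv : ∀ n, φ (y n) = v n := hyv
  refine ⟨y, fun m n h => hv (by rw [← hyv m, ← hyv n, h]), i, fun z hz => ?_⟩
  have hz' : φ z ∈ Hindman.FP v := by
    rw [show v = fun n => l * y n + k from (funext hyv).symm, ← image_symSystem hdvd]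
    exact Set.mem_image_of_mem φ hz
  exact hφ.mem_set_image.1 (hb (hvb hz')).1

end SymmetricSystem

/-- Let ℓ,k ∈ ℤ with ℓ ≠ 0 and ℓ ∣ k(k−1). For every injective sequence of
integers (xₙ) and every finite coloring of 𝔖_{ℓ,k}(xₙ), there are an injective sequence
(yₙ) and a color C i with 𝔖_{ℓ,k}(yₙ) ⊆ C i. In particular, for every finite coloring of
ℤ there are an injective sequence (xₙ) and a color C i with 𝔖_{ℓ,k}(xₙ) ⊆ C i. -/
theorem symSystem_partition_regular (l k : ℤ) (hl : l ≠ 0) (hdvd : l ∣ k * (k - 1)) :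
    (∀ x : ℕ → ℤ, Function.Injective x →
      ∀ (r : ℕ) (C : Fin r → Set ℤ), (⋃ i, C i) = symSystem l k x →
        ∃ y : ℕ → ℤ, Function.Injective y ∧ ∃ i : Fin r, symSystem l k y ⊆ C i) ∧
    (∀ (r : ℕ) (C : Fin r → Set ℤ), (⋃ i, C i) = (Set.univ : Set ℤ) →
      ∃ x : ℕ → ℤ, Function.Injective x ∧ ∃ i : Fin r, symSystem l k x ⊆ C i) :=
  ⟨fun _ hx _ C hC => exists_injective_symSystem_subset hl hdvd hx C hC.ge,
    fun _ C hC => exists_injective_symSystem_subset hl hdvd Nat.cast_injective C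
      (hC ▸ Set.subset_univ _)⟩
end

section
/- Let ℓ,k ∈ ℤ with ℓ ≠ 0 and ℓ dividing k−1, let m ∈ ℕ and L ∈ ℕ. Then for every finite coloring ℤ = C_1 ∪ … ∪ C_r there exist a color C_i and integers a_0, a_1, …, a_m ∈ C_i with ℓa_j + k ∉ {0, 1, −1} for all j, such that for every j = 1,…,m and all n_0,…,n_{j−1} ∈ {0,1,…,L} one has (1/ℓ)·((ℓa_j + k)·∏_{s=0}^{j−1} (ℓa_s + k)^{n_s} − k) ∈ C_i. -/
/-!
Put t = 1 + ℓ². Since t ≡ 1 ≡ k (mod ℓ), every `(t ^ E - k) / ℓ` is an integer `a` with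
`ℓ a + k = t ^ E`, and under `E ↦ (t ^ E - k) / ℓ` the ⋆-product `a₀^(n₀) ⋆ ⋯ ⋆ a_j` becomes the
exponent `e_j + ∑_{s<j} n_s e_s`. So it suffices to colour ℕ by pulling the colouring back and to
find positive `e₀, …, e_m` for which all these exponents share a colour, i.e. a monochromatic
Deuber set. This is Deuber's argument: induction on `m` with a van der Waerden theorem whose bounds
are uniform in the colouring (from Hales–Jewett) gives such `e` with the colour depending only on
the row `j`, and pigeonholing `m r + 1` rows yields `m + 1` rows of one colour.
-/

open Finset

namespace Combinatorics.Line

lemma val_apply {ι : Type*} {T : ℕ} (l : Line (Fin (T + 1)) ι) (x : Fin (T + 1)) (i : ι) :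
    (l x i : ℕ) =
      (if l.idxFun i = none then (x : ℕ) else 0) + ((l.idxFun i).map Fin.val).getD 0 := by
  cases h : l.idxFun i <;> simp [h]

lemma sum_val_apply {ι : Type*} [Fintype ι] {T : ℕ} (l : Line (Fin (T + 1)) ι) (x : Fin (T + 1)) :
    ∑ i, (l x i : ℕ) = #{i | l.idxFun i = none} * x + ∑ i, ((l.idxFun i).map Fin.val).getD 0 := by
  simp_rw [val_apply, sum_add_distrib, sum_ite, sum_const_zero, add_zero, sum_const, smul_eq_mul]

end Combinatorics.Line

open Combinatorics in
theorem exists_uniform_mono_arithProg (κ : Type*) [Finite κ] (T : ℕ) :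
    ∃ N : ℕ, ∀ χ : ℕ → κ, ∃ a ∈ Set.Icc 1 N, ∃ b ≤ N, ∃ c, ∀ s ≤ T, χ (a * s + b) = c := by
  classical
  obtain ⟨ι, _, hι⟩ := Line.exists_mono_in_high_dimension (Fin (T + 1)) κ
  refine ⟨Fintype.card ι * (T + 1), fun χ => ?_⟩
  obtain ⟨l, c, hl⟩ := hι fun v => χ (∑ i, (v i : ℕ))
  set b := ∑ i, ((l.idxFun i).map Fin.val).getD 0
  have hb : b ≤ Fintype.card ι * T := by
    refine (sum_le_card_nsmul _ _ T fun i _ => ?_).trans_eq (smul_eq_mul ..)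
    cases l.idxFun i <;> simp [Fin.is_le]
  refine ⟨#{i | l.idxFun i = none}, ⟨card_pos.2 ?_, ?_⟩, b, ?_, c, fun s hs => ?_⟩
  · obtain ⟨i, hi⟩ := l.proper
    exact ⟨i, by simpa using hi⟩
  · exact (card_le_univ _).trans (Nat.le_mul_of_pos_right _ T.succ_pos)
  · exact hb.trans (Nat.mul_le_mul_left _ T.le_succ)
  · have hs := hl ⟨s, Nat.lt_succ_of_le hs⟩
    dsimp only at hs
    rwa [Line.sum_val_apply] at hs

lemma sum_range_mul_le {L B j : ℕ} {n e : ℕ → ℕ} (hn : ∀ s < j, n s ≤ L)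
    (he : ∀ s < j, e s ≤ B) : ∑ s ∈ range j, n s * e s ≤ j * (L * B) := by
  simpa using sum_le_card_nsmul (range j) _ _ fun s hs =>
    Nat.mul_le_mul (hn s (mem_range.1 hs)) (he s (mem_range.1 hs))

def deuberRow (L : ℕ) (e : ℕ → ℕ) (j : ℕ) : Set ℕ :=
  {x | ∃ n : ℕ → ℕ, (∀ s < j, n s ≤ L) ∧ x = e j + ∑ s ∈ range j, n s * e s}

section deuberRow

variable {L j : ℕ} {e : ℕ → ℕ}

lemma self_mem_deuberRow : e j ∈ deuberRow L e j :=
  ⟨0, fun _ _ => Nat.zero_le L, by simp⟩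

lemma deuberRow_comp_subset {φ : ℕ → ℕ} (hφ : StrictMonoOn φ (Set.Iic j)) :
    deuberRow L (e ∘ φ) j ⊆ deuberRow L e (φ j) := by
  classical
  rintro x ⟨n, hn, rfl⟩
  have hmaps : ∀ s ∈ range j, φ s ∈ range (φ j) := fun s hs =>
    mem_range.2 (hφ (Set.mem_Iic.2 (mem_range.1 hs).le) Set.self_mem_Iic (mem_range.1 hs))
  refine ⟨fun y => ∑ s ∈ range j with φ s = y, n s, fun y _ => ?_, ?_⟩
  · have hfiber : #{s ∈ range j | φ s = y} ≤ 1 := card_le_one.2 fun s hs s' hs' => by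
      simp only [mem_filter, mem_range] at hs hs'
      exact hφ.injOn (Set.mem_Iic.2 hs.1.le) (Set.mem_Iic.2 hs'.1.le) (hs.2.trans hs'.2.symm)
    calc ∑ s ∈ range j with φ s = y, n s
        ≤ #{s ∈ range j | φ s = y} • L :=
          sum_le_card_nsmul _ _ _ fun s hs => hn s (mem_range.1 (mem_filter.1 hs).1)
      _ ≤ L := by simpa using Nat.mul_le_mul_right L hfiber
  · rw [Function.comp_apply, ← sum_fiberwise_of_maps_to hmaps]
    refine congrArg _ (sum_congr rfl fun y _ => ?_)
    rw [sum_mul]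
    exact sum_congr rfl fun s hs => by rw [Function.comp_apply, (mem_filter.1 hs).2]

end deuberRow

/-- The bound `B`, uniform in `χ`, fixes the length of the progression in the induction step. -/
theorem exists_bounded_deuberRows_colored (κ : Type*) [Finite κ] (L m : ℕ) :
    ∃ B, ∀ χ : ℕ → κ, ∃ e : ℕ → ℕ, ∃ c : ℕ → κ,
      (∀ j ≤ m, e j ∈ Set.Icc 1 B) ∧ ∀ j ≤ m, ∀ x ∈ deuberRow L e j, χ x = c j := by
  induction m with
  | zero =>
    refine ⟨1, fun χ => ⟨fun _ => 1, fun _ => χ 1, fun j _ => ⟨le_rfl, le_rfl⟩, ?_⟩⟩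
    rintro j hj x ⟨n, -, rfl⟩
    obtain rfl : j = 0 := Nat.le_zero.1 hj
    simp
  | succ m ih =>
    obtain ⟨B, hB⟩ := ih
    obtain ⟨N, hN⟩ := exists_uniform_mono_arithProg κ ((m + 1) * (L * B))
    refine ⟨max (N * B) (N + 1), fun χ => ?_⟩
    obtain ⟨a, ⟨ha, haN⟩, b, hbN, c', hc'⟩ := hN fun x => χ (x + 1)
    obtain ⟨d, c, hd, hc⟩ := hB fun y => χ (a * y)
    have hsum : ∀ j ≤ m + 1, ∀ n : ℕ → ℕ,
        ∑ s ∈ range j, n s * (if s ≤ m then a * d s else b + 1) = a * ∑ s ∈ range j, n s * d s :=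
      fun j hj n => by
        rw [mul_sum]
        refine sum_congr rfl fun s hs => ?_
        rw [if_pos (by grind), mul_left_comm]
    refine ⟨fun j => if j ≤ m then a * d j else b + 1, fun j => if j ≤ m then c j else c',
      fun j hj => ?_, ?_⟩
    · dsimp only
      split_ifs with hjm
      · exact ⟨Nat.mul_pos ha (hd j hjm).1,
          (Nat.mul_le_mul haN (hd j hjm).2).trans (le_max_left ..)⟩
      · exact ⟨Nat.succ_pos b, (Nat.succ_le_succ hbN).trans (le_max_right ..)⟩
    rintro j hj x ⟨n, hn, rfl⟩
    rw [hsum j hj]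
    dsimp only
    split_ifs with hjm
    · rw [← mul_add]
      exact hc j hjm _ ⟨n, hn, rfl⟩
    · obtain rfl : j = m + 1 := by omega
      convert hc' _ (sum_range_mul_le hn fun s hs => (hd s (Nat.le_of_lt_succ hs)).2) using 2
      ring

lemma Finset.exists_strictMonoOn_Iic_mapsTo {s : Finset ℕ} {m : ℕ} (hs : m < #s) :
    ∃ φ : ℕ → ℕ, StrictMonoOn φ (Set.Iic m) ∧ ∀ t ≤ m, φ t ∈ s := by
  refine ⟨fun t => s.orderEmbOfFin rfl ⟨min t m, by omega⟩, fun t ht u hu htu => ?_,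
    fun t _ => s.orderEmbOfFin_mem rfl _⟩
  simp only [OrderEmbedding.lt_iff_lt, Fin.mk_lt_mk]
  rw [Set.mem_Iic] at ht hu
  omega

theorem exists_mono_deuberRows (κ : Type*) [Finite κ] (L m : ℕ) (χ : ℕ → κ) :
    ∃ (c : κ) (e : ℕ → ℕ), (∀ j ≤ m, 1 ≤ e j) ∧ ∀ j ≤ m, ∀ x ∈ deuberRow L e j, χ x = c := by
  classical
  have := Fintype.ofFinite κ
  obtain ⟨B, hB⟩ := exists_bounded_deuberRows_colored κ L (m * Fintype.card κ)
  obtain ⟨e, c, he, hc⟩ := hB χ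
  obtain ⟨y, -, hy⟩ := exists_lt_card_fiber_of_mul_lt_card_of_maps_to (t := univ) (n := m)
    (s := range (m * Fintype.card κ + 1)) (f := c) (fun _ _ => mem_univ _)
    (by rw [card_univ, card_range, mul_comm]; exact Nat.lt_succ_self _)
  obtain ⟨φ, hφ, hφy⟩ := exists_strictMonoOn_Iic_mapsTo hy
  have hφ' : ∀ t ≤ m, φ t ≤ m * Fintype.card κ ∧ c (φ t) = y := fun t ht => by
    simpa [Nat.lt_succ_iff] using hφy t ht
  refine ⟨y, e ∘ φ, fun j hj => (he _ (hφ' j hj).1).1, fun j hj x hx => ?_⟩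
  rw [← (hφ' j hj).2]
  exact hc _ (hφ' j hj).1 x (deuberRow_comp_subset (hφ.mono (Set.Iic_subset_Iic.2 hj)) hx)

lemma dvd_pow_sub_of_dvd_sub_one {l t k : ℤ} (ht : l ∣ t - 1) (hk : l ∣ k - 1) (E : ℕ) :
    l ∣ t ^ E - k := by
  simpa using (ht.trans (sub_one_dvd_pow_sub_one t E)).sub hk

theorem deuber_type_int_general (l k : ℤ) (hl : l ≠ 0) (hdvd : l ∣ (k - 1)) (m L : ℕ)
    (r : ℕ) (C : Fin r → Set ℤ)
    (hC : (⋃ i, C i) = (Set.univ : Set ℤ)) :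
    ∃ (i : Fin r) (a : ℕ → ℤ),
      (∀ j ≤ m, a j ∈ C i) ∧
      (∀ j ≤ m, l * a j + k ≠ 0 ∧ l * a j + k ≠ 1 ∧ l * a j + k ≠ -1) ∧
      (∀ j : ℕ, 1 ≤ j → j ≤ m → ∀ n : ℕ → ℕ, (∀ s < j, n s ≤ L) →
        ((l * a j + k) * (∏ s ∈ Finset.range j, (l * a s + k) ^ n s) - k) / l ∈ C i) := by
  choose D hD using fun z => Set.mem_iUnion.1 (hC ▸ Set.mem_univ z : z ∈ ⋃ i, C i)
  set t : ℤ := 1 + l ^ 2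
  have ht : 1 < t := lt_add_of_pos_right 1 (sq_pos_of_ne_zero hl)
  have hlift : ∀ E : ℕ, l * ((t ^ E - k) / l) + k = t ^ E := fun E => by
    rw [Int.mul_ediv_cancel' (dvd_pow_sub_of_dvd_sub_one (by simp [t]) hdvd E), sub_add_cancel]
  obtain ⟨i, e, he, hmono⟩ := exists_mono_deuberRows (Fin r) L m fun E => D ((t ^ E - k) / l)
  have hcolor : ∀ j ≤ m, ∀ x ∈ deuberRow L e j, (t ^ x - k) / l ∈ C i := fun j hj x hx =>
    hmono j hj x hx ▸ hD _
  refine ⟨i, fun j => (t ^ e j - k) / l, fun j hj => hcolor j hj _ self_mem_deuberRow,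
    fun j hj => ?_, fun j _ hj n hn => ?_⟩
  · have := one_lt_pow₀ ht (Nat.one_le_iff_ne_zero.1 (he j hj))
    simp only [hlift]
    omega
  · simp only [hlift, ← pow_mul', ← pow_add, prod_pow_eq_pow_sum]
    exact hcolor j hj _ ⟨n, hn, rfl⟩

/-- Deuber-type theorem for ⋆_{ℓ,k} on ℤ. Let ℓ,k ∈ ℤ with ℓ ≠ 0 and
ℓ ∣ k−1, and let m, L ≥ 1. For every finite coloring of ℤ there are a color C i and
integers a₀,…,a_m ∈ C i with ℓa_j + k ∉ {0,1,−1}, such that for every j = 1,…,m and all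
n₀,…,n_{j−1} ∈ {0,…,L}, (1/ℓ)·((ℓa_j+k)·∏_{s<j}(ℓa_s+k)^{n_s} − k) ∈ C i. -/
theorem deuber_type_int (l k : ℤ) (hl : l ≠ 0) (hdvd : l ∣ (k - 1)) (m L : ℕ)
    (hm : 0 < m) (hL : 0 < L) (r : ℕ) (C : Fin r → Set ℤ)
    (hC : (⋃ i, C i) = (Set.univ : Set ℤ)) :
    ∃ (i : Fin r) (a : ℕ → ℤ),
      (∀ j ≤ m, a j ∈ C i) ∧
      (∀ j ≤ m, l * a j + k ≠ 0 ∧ l * a j + k ≠ 1 ∧ l * a j + k ≠ -1) ∧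
      (∀ j : ℕ, 1 ≤ j → j ≤ m → ∀ n : ℕ → ℕ, (∀ s < j, n s ≤ L) →
        ((l * a j + k) * (∏ s ∈ Finset.range j, (l * a s + k) ^ n s) - k) / l ∈ C i) :=
  deuber_type_int_general l k hl hdvd m L r C hC
end

section
/- Let ℓ,k ∈ ℤ with ℓ > 0 and ℓ dividing k−1, let m ∈ ℕ and L ∈ ℕ. Then for every finite coloring ℕ = C_1 ∪ … ∪ C_r of the positive integers there exist a color C_i and positive integers a_0, a_1, …, a_m ∈ C_i with ℓa_j + k ∉ {0, 1, −1} for all j, such that for every j = 1,…,m and all n_0,…,n_{j−1} ∈ {0,1,…,L} one has (1/ℓ)·((ℓa_j + k)·∏_{s=0}^{j−1} (ℓa_s + k)^{n_s} − k) ∈ C_i. -/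
open Filter

lemma uf_color {κ : Type} [Finite κ] [Nonempty κ] (U : Ultrafilter ℕ) (f : ℕ → κ) :
    ∃ c, {N | f N = c} ∈ U := by
  by_contra h
  push_neg at h
  have h2 : ∀ c, {N | f N ≠ c} ∈ U := fun c => (Ultrafilter.compl_mem_iff_notMem).2 (h c)
  have h3 : (⋂ c, {N | f N ≠ c}) ∈ U := (Filter.iInter_mem).2 h2
  have h4 : (⋂ c, {N | f N ≠ c}) = (∅ : Set ℕ) := by ext N; simp
  rw [h4] at h3
  exact Filter.empty_notMem _ h3

lemma compactness {κ : Type} [Finite κ] [Nonempty κ] {W : Type}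
    (S : W → Finset ℕ) (P : W → (ℕ → κ) → Prop)
    (hloc : ∀ w χ χ', (∀ x ∈ S w, χ x = χ' x) → P w χ → P w χ')
    (h : ∀ χ : ℕ → κ, ∃ w, P w χ) :
    ∃ N : ℕ, ∀ χ : ℕ → κ, ∃ w, P w χ ∧ ∀ x ∈ S w, x ≤ N := by
  by_contra hcon
  push_neg at hcon
  choose χ hχ using hcon
  have : (Filter.cofinite : Filter ℕ).NeBot := Filter.cofinite_neBot
  set U : Ultrafilter ℕ := Ultrafilter.of Filter.cofinite with hU
  have hUle : (U : Filter ℕ) ≤ Filter.cofinite := Ultrafilter.of_le _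
  have hsel : ∀ x : ℕ, ∃ c, {N | χ N x = c} ∈ U := fun x => uf_color U (fun N => χ N x)
  choose χs hχs using hsel
  obtain ⟨w, hw⟩ := h χs
  have hagree : {N | ∀ x ∈ S w, χ N x = χs x} ∈ U := by
    have : (⋂ x ∈ (S w : Finset ℕ), {N | χ N x = χs x}) ∈ U :=
      (Filter.biInter_finset_mem (S w)).2 fun x _ => hχs x
    refine Filter.mem_of_superset this ?_
    intro N hN
    simp only [Set.mem_iInter] at hN
    exact fun x hx => hN x hx
  have hbig : {N : ℕ | ∀ x ∈ S w, x ≤ N} ∈ U := by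
    apply hUle
    have hsup : {N : ℕ | ∀ x ∈ S w, x ≤ N} ⊇ {N : ℕ | (S w).sup id ≤ N} := by
      intro N hN x hx
      exact le_trans (Finset.le_sup (f := id) hx) hN
    refine Filter.mem_of_superset ?_ hsup
    rw [Filter.mem_cofinite]
    have hsub : {N : ℕ | (S w).sup id ≤ N}ᶜ ⊆ Set.Iio ((S w).sup id) := by
      intro N hN
      simpa using hN
    exact (Set.finite_Iio _).subset hsub
  obtain ⟨N, hN1, hN2⟩ := Ultrafilter.nonempty_of_mem (Filter.inter_mem hagree hbig)
  have hPN : P w (χ N) := hloc w χs (χ N) (fun x hx => (hN1 x hx).symm) hw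
  obtain ⟨x, hx1, hx2⟩ := hχ N w hPN
  exact absurd (hN2 x hx1) (by omega)

/-- Row values of a Deuber (m,L,1)-set with generators `e`. -/
def dval (e : ℕ → ℕ) (j : ℕ) (n : ℕ → ℕ) : ℕ :=
  e j + ∑ s ∈ Finset.range j, n s * e s

lemma dval_le {L m : ℕ} (e : ℕ → ℕ) (j : ℕ) (hj : j ≤ m) (n : ℕ → ℕ)
    (hn : ∀ s < j, n s ≤ L) :
    dval e j n ≤ (L + 1) * ∑ t ∈ Finset.range (m + 1), e t := by
  have h1 : e j ≤ ∑ t ∈ Finset.range (m + 1), e t :=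
    Finset.single_le_sum (fun t _ => Nat.zero_le _) (Finset.mem_range.2 (by omega))
  have h2 : ∑ s ∈ Finset.range j, n s * e s ≤ L * ∑ t ∈ Finset.range (m + 1), e t := by
    calc ∑ s ∈ Finset.range j, n s * e s ≤ ∑ s ∈ Finset.range j, L * e s := by
          apply Finset.sum_le_sum
          intro s hs
          exact Nat.mul_le_mul_right _ (hn s (Finset.mem_range.1 hs))
      _ = L * ∑ s ∈ Finset.range j, e s := by rw [Finset.mul_sum]
      _ ≤ L * ∑ t ∈ Finset.range (m + 1), e t := by
          apply Nat.mul_le_mul_left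
          exact Finset.sum_le_sum_of_subset (Finset.range_subset_range.2 (by omega))
  calc dval e j n ≤ (∑ t ∈ Finset.range (m+1), e t) + L * ∑ t ∈ Finset.range (m+1), e t :=
        Nat.add_le_add h1 h2
    _ = (L + 1) * ∑ t ∈ Finset.range (m + 1), e t := by ring

/-- The main additive claim: per-row-monochromatic (m,L,1)-sets exist for any finite coloring. -/
lemma deuber_claim (L : ℕ) (κ : Type) [Finite κ] [Nonempty κ] (m : ℕ) :
    ∀ χ : ℕ → κ, ∃ (e : ℕ → ℕ) (i : ℕ → κ), (∀ j ≤ m, 1 ≤ e j) ∧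
      (∀ j ≤ m, ∀ n : ℕ → ℕ, (∀ s < j, n s ≤ L) → χ (dval e j n) = i j) := by
  induction m with
  | zero =>
    intro χ
    refine ⟨fun _ => 1, fun _ => χ 1, fun j hj => le_refl _, ?_⟩
    intro j hj n hn
    interval_cases j
    simp [dval]
  | succ m IH =>
    have hfin : ∃ N : ℕ, ∀ χ : ℕ → κ, ∃ w : (ℕ → ℕ) × (ℕ → κ),
        ((∀ j ≤ m, 1 ≤ w.1 j) ∧
          (∀ j ≤ m, ∀ n : ℕ → ℕ, (∀ s < j, n s ≤ L) → χ (dval w.1 j n) = w.2 j)) ∧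
        ∀ x ∈ Finset.range ((L + 1) * (∑ t ∈ Finset.range (m+1), w.1 t) + 1), x ≤ N := by
      apply compactness (W := (ℕ → ℕ) × (ℕ → κ))
        (fun w => Finset.range ((L + 1) * (∑ t ∈ Finset.range (m+1), w.1 t) + 1))
        (fun w χ => (∀ j ≤ m, 1 ≤ w.1 j) ∧
          (∀ j ≤ m, ∀ n : ℕ → ℕ, (∀ s < j, n s ≤ L) → χ (dval w.1 j n) = w.2 j))
      · rintro w χ χ' hag ⟨h1, h2⟩
        refine ⟨h1, fun j hj n hn => ?_⟩
        rw [← hag _ ?_, h2 j hj n hn]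
        exact Finset.mem_range.2 (Nat.lt_succ_of_le (dval_le w.1 j hj n hn))
      · intro χ
        obtain ⟨e, i, h1, h2⟩ := IH χ
        exact ⟨⟨e, i⟩, h1, h2⟩
    obtain ⟨N, hN⟩ := hfin
    intro χ
    obtain ⟨a, ha, b, c, hab⟩ :=
      Combinatorics.exists_mono_homothetic_copy (Finset.range (N + 2)) χ
    simp only [smul_eq_mul] at hab
    obtain ⟨⟨e, i⟩, ⟨he1, he2⟩, hbd⟩ := hN (fun x => χ (a * x))
    dsimp only at he1 he2 hbd
    have hbd' : (L + 1) * (∑ t ∈ Finset.range (m+1), e t) ≤ N :=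
      hbd _ (Finset.mem_range.2 (by omega))
    refine ⟨fun j => if j ≤ m then a * e j else a + b,
            fun j => if j ≤ m then i j else c, ?_, ?_⟩
    · intro j hj
      by_cases h : j ≤ m
      · simpa [h] using Nat.one_le_iff_ne_zero.2
          (Nat.mul_ne_zero (by omega) (by have := he1 j h; omega))
      · simp only [h, if_false]
        omega
    · intro j hj n hn
      by_cases h : j ≤ m
      · have hval : dval (fun j => if j ≤ m then a * e j else a + b) j n = a * dval e j n := by
          simp only [dval, if_pos h]
          rw [Nat.mul_add, Finset.mul_sum]
          congr 1
          apply Finset.sum_congr rfl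
          intro s hs
          rw [if_pos (by have := Finset.mem_range.1 hs; omega : s ≤ m)]
          ring
        rw [hval]
        simp only [h, if_true]
        exact he2 j h n hn
      · have hj' : j = m + 1 := by omega
        subst hj'
        have hkey : dval (fun j => if j ≤ m then a * e j else a + b) (m+1) n
            = a * (1 + ∑ s ∈ Finset.range (m+1), n s * e s) + b := by
          simp only [dval, if_neg (by omega : ¬ (m+1 ≤ m))]
          have hsum : ∑ s ∈ Finset.range (m+1), n s * (if s ≤ m then a * e s else a + b)
              = a * ∑ s ∈ Finset.range (m+1), n s * e s := by
            rw [Finset.mul_sum]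
            apply Finset.sum_congr rfl
            intro s hs
            rw [if_pos (by have := Finset.mem_range.1 hs; omega : s ≤ m)]
            ring
          rw [hsum]
          ring
        rw [hkey]
        simp only [if_neg (by omega : ¬ (m+1 ≤ m))]
        apply hab
        refine Finset.mem_range.2 ?_
        have hsum : ∑ s ∈ Finset.range (m+1), n s * e s ≤ N := by
          calc ∑ s ∈ Finset.range (m+1), n s * e s
              ≤ ∑ s ∈ Finset.range (m+1), L * e s := by
                apply Finset.sum_le_sum
                intro s hs
                exact Nat.mul_le_mul_right _ (hn s (by have := Finset.mem_range.1 hs; omega))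
            _ = L * ∑ s ∈ Finset.range (m+1), e s := by rw [Finset.mul_sum]
            _ ≤ (L + 1) * ∑ s ∈ Finset.range (m+1), e s := by
                apply Nat.mul_le_mul_right; omega
            _ ≤ N := hbd'
        omega

/-- Fully monochromatic version, by pigeonhole on rows. -/
lemma deuber_mono (L : ℕ) (κ : Type) [Finite κ] [Nonempty κ] (m : ℕ) (χ : ℕ → κ) :
    ∃ (E : ℕ → ℕ) (c : κ), (∀ j ≤ m, 1 ≤ E j) ∧
      (∀ j ≤ m, ∀ n : ℕ → ℕ, (∀ s < j, n s ≤ L) → χ (dval E j n) = c) := by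
  classical
  cases nonempty_fintype κ
  set r := Fintype.card κ with hr
  set M := m * r with hM
  obtain ⟨e, i, he1, he2⟩ := deuber_claim L κ M χ
  -- pigeonhole: some color receives ≥ m+1 of the rows 0..M
  have hr0 : 0 < r := Fintype.card_pos
  have hpig : ∃ c ∈ (Finset.univ : Finset κ),
      m < ((Finset.range (M+1)).filter fun j => i j = c).card := by
    apply Finset.exists_lt_card_fiber_of_mul_lt_card_of_maps_to
    · intro a _; exact Finset.mem_univ _
    · rw [Finset.card_range, Finset.card_univ, ← hr]
      calc r * m = M := by rw [hM]; ring
        _ < M + 1 := by omega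
  obtain ⟨c, _, hc⟩ := hpig
  obtain ⟨T, hT1, hT2⟩ := Finset.exists_subset_card_eq (by omega : m + 1 ≤ ((Finset.range (M+1)).filter fun j => i j = c).card)
  set σ := T.orderIsoOfFin hT2 with hσ
  set E : ℕ → ℕ := fun j => if h : j < m + 1 then (σ ⟨j, h⟩ : ℕ) else 0 with hE
  have hmem : ∀ j (h : j < m + 1), E j ∈ T := by
    intro j h
    rw [hE]; simp only [dif_pos h]
    exact (σ ⟨j, h⟩).2
  have hEi : ∀ j (h : j < m + 1), i (E j) = c ∧ E j ≤ M := by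
    intro j h
    have := hT1 (hmem j h)
    simp only [Finset.mem_filter, Finset.mem_range] at this
    exact ⟨this.2, by omega⟩
  have hEmono : ∀ u j, u < j → j < m + 1 → E u < E j := by
    intro u j huj hj
    have hu : u < m + 1 := by omega
    rw [hE]; simp only [dif_pos hu, dif_pos hj]
    have : (⟨u, hu⟩ : Fin (m+1)) < ⟨j, hj⟩ := by exact_mod_cast huj
    exact_mod_cast (σ.lt_iff_lt.2 this)
  refine ⟨fun j => e (E j), c, ?_, ?_⟩
  · intro j hj
    exact he1 _ (hEi j (by omega)).2
  · intro j hj n hn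
    set n' : ℕ → ℕ := fun s => ∑ u ∈ (Finset.range j).filter (fun u => E u = s), n u with hn'
    have hval : dval (fun t => e (E t)) j n = dval e (E j) n' := by
      simp only [dval]
      congr 1
      rw [hn']
      have hmaps : ∀ u ∈ Finset.range j, E u ∈ Finset.range (E j) := by
        intro u hu
        simp only [Finset.mem_range] at hu ⊢
        exact hEmono u j hu (by omega)
      rw [← Finset.sum_fiberwise_of_maps_to hmaps (fun u => n u * e (E u))]
      apply Finset.sum_congr rfl
      intro s _
      rw [Finset.sum_mul]
      apply Finset.sum_congr rfl
      intro u hu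
      simp only [Finset.mem_filter] at hu
      rw [hu.2]
    rw [hval]
    have hn'le : ∀ s, s < E j → n' s ≤ L := by
      intro s _
      show ∑ u ∈ (Finset.range j).filter (fun u => E u = s), n u ≤ L
      by_cases hex : ∃ u, u ∈ (Finset.range j).filter (fun u => E u = s)
      · obtain ⟨u₀, hu₀⟩ := hex
        have : (Finset.range j).filter (fun u => E u = s) = {u₀} := by
          apply Finset.eq_singleton_iff_unique_mem.2
          refine ⟨hu₀, ?_⟩
          intro u hu
          simp only [Finset.mem_filter, Finset.mem_range] at hu hu₀
          by_contra hne
          rcases Nat.lt_or_ge u u₀ with h | h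
          · have := hEmono u u₀ h (by omega); omega
          · have := hEmono u₀ u (by omega) (by omega); omega
        rw [this, Finset.sum_singleton]
        simp only [Finset.mem_filter, Finset.mem_range] at hu₀
        exact hn u₀ hu₀.1
      · rw [Finset.filter_eq_empty_iff.2 (by push_neg at hex; intro u hu; exact hex u ∘ (Finset.mem_filter.2 ⟨hu, ·⟩))]
        simp
    rw [he2 (E j) (hEi j (by omega)).2 n' (fun s hs => hn'le s hs)]
    exact (hEi j (by omega)).1


/-- Deuber-type theorem for ⋆_{ℓ,k} on the positive integers. Let ℓ,k ∈ ℤ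
with ℓ > 0 and ℓ ∣ k−1, and let m, L ≥ 1. For every finite coloring of the positive
integers there are a color C i and positive integers a₀,…,a_m ∈ C i with
ℓa_j + k ∉ {0,1,−1}, such that for every j = 1,…,m and all n₀,…,n_{j−1} ∈ {0,…,L},
(1/ℓ)·((ℓa_j+k)·∏_{s<j}(ℓa_s+k)^{n_s} − k) ∈ C i. -/
theorem deuber_type_nat (l k : ℤ) (hl : 0 < l) (hdvd : l ∣ (k - 1)) (m L : ℕ)
    (hm : 0 < m) (hL : 0 < L) (r : ℕ) (C : Fin r → Set ℤ)
    (hC : (⋃ i, C i) = {z : ℤ | 0 < z}) :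
    ∃ (i : Fin r) (a : ℕ → ℤ),
      (∀ j ≤ m, 0 < a j ∧ a j ∈ C i) ∧
      (∀ j ≤ m, l * a j + k ≠ 0 ∧ l * a j + k ≠ 1 ∧ l * a j + k ≠ -1) ∧
      (∀ j : ℕ, 1 ≤ j → j ≤ m → ∀ n : ℕ → ℕ, (∀ s < j, n s ≤ L) →
        ((l * a j + k) * (∏ s ∈ Finset.range j, (l * a s + k) ^ n s) - k) / l ∈ C i) := by
  classical
  have h1 : (1 : ℤ) ∈ ⋃ i, C i := by rw [hC]; simp
  obtain ⟨i₀, hi₀⟩ := Set.mem_iUnion.1 h1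
  have hne : Nonempty (Fin r) := ⟨i₀⟩
  set g : ℤ := l * (1 + (k.natAbs : ℤ)) + 1 with hg
  have hkabs : k ≤ (k.natAbs : ℤ) := Int.le_natAbs
  have habs0 : (0 : ℤ) ≤ (k.natAbs : ℤ) := Int.natCast_nonneg _
  have hg2 : 2 ≤ g := by nlinarith
  have hgk : l + k ≤ g := by nlinarith
  -- divisibility: l ∣ g^t - k for all t
  have hg1 : g ≡ 1 [ZMOD l] := by
    rw [Int.modEq_iff_dvd]
    exact ⟨-(1 + (k.natAbs : ℤ)), by ring⟩
  have hk1 : k ≡ 1 [ZMOD l] := by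
    rw [Int.modEq_iff_dvd]
    have : l ∣ -(k - 1) := dvd_neg.2 hdvd
    simpa using this
  have hdt : ∀ t : ℕ, l ∣ g ^ t - k := by
    intro t
    have hmod : g ^ t ≡ k [ZMOD l] := by
      calc g ^ t ≡ 1 ^ t [ZMOD l] := hg1.pow t
        _ = 1 := one_pow t
        _ ≡ k [ZMOD l] := hk1.symm
    have := Int.ModEq.dvd hmod
    have h2 : l ∣ -(k - g ^ t) := dvd_neg.2 this
    simpa using h2
  -- the quotients
  set q : ℕ → ℤ := fun t => (g ^ t - k) / l with hq
  have hlq : ∀ t, l * q t = g ^ t - k := fun t => Int.mul_ediv_cancel' (hdt t)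
  have hqpos : ∀ t, 1 ≤ t → 1 ≤ q t := by
    intro t ht
    have hgt : g ≤ g ^ t := le_self_pow₀ (by omega) (by omega)
    have : l * 1 ≤ l * q t := by rw [hlq t]; omega
    exact le_of_mul_le_mul_left this hl
  -- the coloring
  have hcol : ∀ t : ℕ, ∃ i : Fin r, 1 ≤ t → q t ∈ C i := by
    intro t
    by_cases ht : 1 ≤ t
    · have : q t ∈ ⋃ i, C i := by
        rw [hC]
        exact lt_of_lt_of_le one_pos (hqpos t ht)
      obtain ⟨i, hi⟩ := Set.mem_iUnion.1 this
      exact ⟨i, fun _ => hi⟩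
    · exact ⟨i₀, fun h => absurd h ht⟩
  choose χ hχ using hcol
  obtain ⟨E, c, hE1, hE2⟩ := deuber_mono L (Fin r) m χ
  refine ⟨c, fun j => q (E j), ?_, ?_, ?_⟩
  · intro j hj
    have hEj := hE1 j hj
    have hcolj : χ (E j) = c := by
      have := hE2 j hj (fun _ => 0) (fun s _ => Nat.zero_le L)
      simpa [dval] using this
    exact ⟨lt_of_lt_of_le one_pos (hqpos _ hEj), hcolj ▸ hχ (E j) hEj⟩
  · intro j hj
    dsimp only
    have hEj := hE1 j hj
    have hval : l * q (E j) + k = g ^ (E j) := by rw [hlq]; ring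
    have hgt : (2 : ℤ) ≤ g ^ (E j) := le_trans hg2 (le_self_pow₀ (by omega) (by omega))
    rw [hval]
    omega
  · intro j hj1 hj2 n hn
    dsimp only
    have hprod : (l * q (E j) + k) * (∏ s ∈ Finset.range j, (l * q (E s) + k) ^ n s)
        = g ^ (dval E j n) := by
      have hvals : ∀ s, l * q (E s) + k = g ^ (E s) := by
        intro s; rw [hlq]; ring
      rw [hvals]
      have : ∀ s ∈ Finset.range j, (l * q (E s) + k) ^ n s = g ^ (n s * E s) := by
        intro s _
        rw [hvals s, ← pow_mul, mul_comm]
      rw [Finset.prod_congr rfl this, Finset.prod_pow_eq_pow_sum, ← pow_add]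
      rfl
    rw [hprod]
    set V := dval E j n with hV
    have hV1 : 1 ≤ V := by
      have := hE1 j hj2
      have : E j ≤ V := Nat.le_add_right _ _
      omega
    have : (g ^ V - k) / l = q V := rfl
    rw [this]
    have hcolV : χ V = c := hE2 j hj2 n hn
    exact hcolV ▸ hχ V hV1
end

section
/- Let ℓ,k ∈ ℤ with ℓ ≠ 0 and ℓ dividing k−1. Then for every finite coloring ℤ = C_1 ∪ … ∪ C_r and every L ∈ ℕ there exist a color C_i and integers a, b such that the elements a, b, and (1/ℓ)·((ℓa+k)(ℓb+k)^j − k) for j = 1,…,L all belong to C_i, and these L+2 elements are pairwise distinct. -/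
private lemma vdwFin (q len : ℕ) : ∃ W : ℕ, ∀ c : ℕ → Fin q,
    ∃ a b : ℕ, 0 < a ∧ b + len * a ≤ W ∧ ∀ j ≤ len, c (b + a * j) = c b := by
  by_contra h
  push_neg at h
  choose cf hcf using h
  obtain ⟨U, hU⟩ : ∃ U : Ultrafilter ℕ, (U : Filter ℕ) ≤ Filter.atTop :=
    ⟨Ultrafilter.of Filter.atTop, Ultrafilter.of_le _⟩
  have hlim : ∀ x : ℕ, ∃ i : Fin q, {W | cf W x = i} ∈ U := by
    intro x
    obtain ⟨i, hi⟩ := (U.map (fun W => cf W x)).eq_pure_of_finite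
    refine ⟨i, ?_⟩
    have : {i} ∈ U.map (fun W => cf W x) := by rw [hi]; exact Filter.singleton_mem_pure
    simpa [Ultrafilter.mem_map, Set.preimage, Set.mem_singleton_iff] using this
  choose c hc using hlim
  obtain ⟨a, ha, b, c₀, hmono⟩ :=
    Combinatorics.exists_mono_homothetic_copy (Finset.range (len + 1)) c
  have hcb : c b = c₀ := by
    simpa using hmono 0 (Finset.mem_range.mpr (Nat.succ_pos _))
  have hA : ∀ᶠ W in (U : Filter ℕ), ∀ j ∈ Finset.range (len + 1), cf W (b + a * j) = c (b + a * j) :=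
    Filter.eventually_all_finset _ |>.mpr (fun j _ => hc (b + a * j))
  have hB : ∀ᶠ W in (U : Filter ℕ), b + len * a ≤ W := hU (Filter.eventually_ge_atTop _)
  obtain ⟨W, hWA, hWB⟩ := (hA.and hB).exists
  obtain ⟨j, hj, hjne⟩ := hcf W a b ha hWB
  apply hjne
  have h1 : cf W (b + a * j) = c (b + a * j) := hWA j (Finset.mem_range.mpr (Nat.lt_succ_of_le hj))
  have h2 : cf W (b + a * 0) = c (b + a * 0) := hWA 0 (Finset.mem_range.mpr (Nat.succ_pos _))
  have h3 : c (b + a * j) = c₀ := by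
    have := hmono j (Finset.mem_range.mpr (Nat.lt_succ_of_le hj))
    simpa [smul_eq_mul, Nat.add_comm, Nat.mul_comm] using this
  simp only [Nat.mul_zero, Nat.add_zero] at h2
  rw [h1, h2, h3, hcb]

private lemma brauerFin (L : ℕ) : ∀ s : ℕ, ∃ N : ℕ, 0 < N ∧
    ∀ (r : ℕ) (c : ℕ → Fin r) (F : Finset (Fin r)), F.card ≤ s →
      (∀ x, 1 ≤ x → x ≤ N → c x ∈ F) →
      ∃ m n, 0 < m ∧ 0 < n ∧ m + L * n ≤ N ∧ c n = c m ∧ ∀ j ≤ L, c (m + j * n) = c m := by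
  intro s
  induction s with
  | zero =>
    refine ⟨1, one_pos, fun r c F hF hmem => ?_⟩
    have := hmem 1 le_rfl le_rfl
    rw [Finset.card_eq_zero.mp (Nat.le_zero.mp hF)] at this
    simp at this
  | succ s IH =>
    obtain ⟨N₁, hN₁pos, hN₁⟩ := IH
    set len := (L + 1) * N₁ with hlen
    have hN1len : N₁ ≤ len := by
      rw [hlen]; exact Nat.le_mul_of_pos_left N₁ (Nat.succ_pos L)
    obtain ⟨W, hW⟩ := vdwFin (s + 2) len
    refine ⟨W + 1, Nat.succ_pos _, ?_⟩
    intro r c F hF hmem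
    classical
    have hcard : F.card ≤ s + 1 := hF
    -- recolor into Fin (s+2)
    let d : ℕ → Fin (s + 2) := fun x =>
      if h : c x ∈ F then Fin.castSucc (Fin.castLE hcard (F.equivFin ⟨c x, h⟩))
      else Fin.last (s + 1)
    have hd : ∀ x y, c x ∈ F → d x = d y → c x = c y := by
      intro x y hx hdeq
      by_cases hy : c y ∈ F
      · simp only [d, dif_pos hx, dif_pos hy] at hdeq
        have := Fin.castSucc_injective _ hdeq
        have := Fin.castLE_injective hcard this
        have := F.equivFin.injective this
        exact Subtype.ext_iff.mp this
      · simp only [d, dif_pos hx, dif_neg hy] at hdeq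
        exact absurd hdeq (Fin.ne_of_lt (Fin.castSucc_lt_last _))
    obtain ⟨a, b, ha, hble, hmono⟩ := hW (fun x => d (x + 1))
    set B := b + 1 with hB
    have hmono' : ∀ j ≤ len, d (B + a * j) = d B := by
      intro j hj
      have := hmono j hj
      simpa [hB, Nat.add_right_comm] using this
    have hBN : B + len * a ≤ W + 1 := by omega
    have hBF : c B ∈ F := hmem B (by omega) (by nlinarith)
    have hcolor : ∀ j ≤ len, c (B + a * j) = c B := by
      intro j hj
      have hin : c (B + a * j) ∈ F := by
        refine hmem _ (by omega) ?_
        have : a * j ≤ a * len := Nat.mul_le_mul_left a hj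
        nlinarith
      exact hd _ _ hin (hmono' j hj)
    by_cases hcase : ∃ t, 1 ≤ t ∧ t ≤ N₁ ∧ c (a * t) = c B
    · obtain ⟨t, ht1, ht2, htc⟩ := hcase
      refine ⟨B + a * t, a * t, by omega, Nat.mul_pos ha ht1, ?_, ?_, ?_⟩
      · have h1 : t * (L + 1) ≤ len := by rw [hlen]; nlinarith
        have : a * (t * (L + 1)) ≤ a * len := Nat.mul_le_mul_left a h1
        nlinarith
      · rw [htc, hcolor t (by omega)]
      · intro j hj
        have h1 : t * (j + 1) ≤ len := by rw [hlen]; nlinarith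
        have e1 : B + a * t + j * (a * t) = B + a * (t * (j + 1)) := by ring
        rw [e1, hcolor _ h1, hcolor t (by omega)]
    · push_neg at hcase
      have hc1 : (F.erase (c B)).card ≤ s := by
        have : (F.erase (c B)).card = F.card - 1 := Finset.card_erase_of_mem hBF
        omega
      have hc2 : ∀ x, 1 ≤ x → x ≤ N₁ → c (a * x) ∈ F.erase (c B) := by
        intro x hx1 hx2
        refine Finset.mem_erase.mpr ⟨hcase x hx1 hx2, ?_⟩
        refine hmem _ (by nlinarith) ?_
        have h1 : a * x ≤ a * N₁ := Nat.mul_le_mul_left a hx2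
        have h2 : a * N₁ ≤ a * len := Nat.mul_le_mul_left a hN1len
        nlinarith
      obtain ⟨m', n', hm', hn', hsum, hcn, hconf⟩ :=
        hN₁ r (fun x => c (a * x)) (F.erase (c B)) hc1 hc2
      refine ⟨a * m', a * n', Nat.mul_pos ha hm', Nat.mul_pos ha hn', ?_, hcn, ?_⟩
      · have h1 : a * (m' + L * n') ≤ a * N₁ := Nat.mul_le_mul_left a hsum
        have h2 : a * N₁ ≤ a * len := Nat.mul_le_mul_left a hN1len
        nlinarith
      · intro j hj
        have e1 : a * m' + j * (a * n') = a * (m' + j * n') := by ring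
        rw [e1]
        exact hconf j hj

private lemma brauerNat (r : ℕ) (c : ℕ → Fin r) (L : ℕ) :
    ∃ m n, 0 < m ∧ 0 < n ∧ m ≠ n ∧ c n = c m ∧ ∀ j ≤ L, c (m + j * n) = c m := by
  obtain ⟨N, hNpos, hN⟩ := brauerFin (L + 1) r
  obtain ⟨m, n, hm, hn, _, hcn, hconf⟩ :=
    hN r c Finset.univ (by simp) (fun x _ _ => Finset.mem_univ _)
  by_cases hmn : m = n
  · refine ⟨m + n, n, by omega, hn, by omega, ?_, ?_⟩
    · rw [hcn, ← hconf 1 (by omega)]; ring_nf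
    · intro j hj
      have e1 : m + n + j * n = m + (j + 1) * n := by ring
      rw [e1, hconf (j + 1) (by omega), ← hconf 1 (by omega)]
      ring_nf
  · exact ⟨m, n, hm, hn, hmn, hcn, fun j hj => hconf j (by omega)⟩

/-- Brauer-type theorem for ⋆_{ℓ,k} on ℤ. Let ℓ,k ∈ ℤ with ℓ ≠ 0 and
ℓ ∣ k−1. For every finite coloring of ℤ and every L ≥ 1 there are a color C i and
integers a, b such that a, b, and (1/ℓ)·((ℓa+k)(ℓb+k)^j − k) for j = 1,…,L all lie in
C i, and these L+2 elements are pairwise distinct. -/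
theorem brauer_type_int (l k : ℤ) (hl : l ≠ 0) (hdvd : l ∣ (k - 1)) (r : ℕ)
    (C : Fin r → Set ℤ) (hC : (⋃ i, C i) = (Set.univ : Set ℤ)) (L : ℕ) (hL : 0 < L) :
    ∃ (i : Fin r) (a b : ℤ),
      a ∈ C i ∧ b ∈ C i ∧
      (∀ j : ℕ, 1 ≤ j → j ≤ L → ((l * a + k) * (l * b + k) ^ j - k) / l ∈ C i) ∧
      Function.Injective (fun j : Fin (L + 2) =>
        if (j : ℕ) = 0 then a
        else if (j : ℕ) = 1 then b
        else ((l * a + k) * (l * b + k) ^ ((j : ℕ) - 1) - k) / l) := by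
  classical
  set q : ℤ := k + l * (l * (2 + |k|)) with hqdef
  have hll : 1 ≤ l * l := by
    rcases lt_or_gt_of_ne hl with h | h <;> nlinarith
  have hq2 : 2 ≤ q := by
    have h1 : -|k| ≤ k := neg_abs_le k
    have h2 : (0:ℤ) ≤ |k| := abs_nonneg k
    have : l * (l * (2 + |k|)) = (l * l) * (2 + |k|) := by ring
    nlinarith
  have hk1 : k ≡ 1 [ZMOD l] := Int.modEq_iff_dvd.mpr (by simpa using dvd_neg.mpr hdvd)
  have hqk : q ≡ k [ZMOD l] := Int.modEq_iff_dvd.mpr ⟨-(l * (2 + |k|)), by rw [hqdef]; ring⟩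
  have hq1 : q ≡ 1 [ZMOD l] := hqk.trans hk1
  have hdvdq : ∀ x : ℕ, l ∣ q ^ x - k := by
    intro x
    have h4 : q ^ x ≡ 1 [ZMOD l] := by simpa using hq1.pow x
    have h5 : k ≡ q ^ x [ZMOD l] := hk1.trans h4.symm
    exact h5.dvd
  set e : ℕ → ℤ := fun x => (q ^ x - k) / l with hedef
  have hkey : ∀ x : ℕ, l * e x + k = q ^ x := by
    intro x
    have := Int.mul_ediv_cancel' (hdvdq x)
    simp only [hedef]
    omega
  have hqinj : Function.Injective (fun x : ℕ => q ^ x) :=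
    (pow_right_strictMono₀ (by omega : (1:ℤ) < q)).injective
  have heinj : Function.Injective e := by
    intro x y hxy
    apply hqinj
    show q ^ x = q ^ y
    rw [← hkey x, ← hkey y, hxy]
  have hcov : ∀ z : ℤ, ∃ i : Fin r, z ∈ C i := by
    intro z
    have : z ∈ ⋃ i, C i := by rw [hC]; trivial
    exact Set.mem_iUnion.mp this
  choose col hcol using hcov
  obtain ⟨m, n, hm, hn, hmn, hcn, hconf⟩ := brauerNat r (fun x => col (e x)) L
  have hprod : ∀ j : ℕ, (l * e m + k) * (l * e n + k) ^ j = q ^ (m + n * j) := by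
    intro j
    rw [hkey m, hkey n, ← pow_mul, ← pow_add]
  refine ⟨col (e m), e m, e n, hcol (e m), hcn ▸ hcol (e n), ?_, ?_⟩
  · intro j hj1 hjL
    have h1 : ((l * e m + k) * (l * e n + k) ^ j - k) / l = e (m + j * n) := by
      rw [hprod j, hedef, Nat.mul_comm n j]
    rw [h1, ← hconf j hjL]
    exact hcol _
  · set g : ℕ → ℕ := fun x => if x = 0 then m else if x = 1 then n else m + n * (x - 1)
      with hgdef
    have hg0 : g 0 = m := by simp [hgdef]
    have hg1 : g 1 = n := by simp [hgdef]
    have hval : ∀ x : ℕ, x ≠ 0 → x ≠ 1 → g x = m + n * (x - 1) := by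
      intro x h0 h1
      simp only [hgdef, if_neg h0, if_neg h1]
    have hginj : ∀ x y : ℕ, g x = g y → x = y := by
      intro x y hxy
      by_cases hx0 : x = 0
      · subst hx0
        by_cases hy0 : y = 0
        · omega
        · by_cases hy1 : y = 1
          · subst hy1
            rw [hg0, hg1] at hxy
            exact absurd hxy hmn
          · rw [hg0, hval y hy0 hy1] at hxy
            have h2 : n * 1 ≤ n * (y - 1) := Nat.mul_le_mul_left n (by omega)
            omega
      · by_cases hx1 : x = 1
        · subst hx1
          by_cases hy0 : y = 0
          · subst hy0
            rw [hg0, hg1] at hxy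
            exact absurd hxy.symm hmn
          · by_cases hy1 : y = 1
            · omega
            · rw [hg1, hval y hy0 hy1] at hxy
              have h2 : n * 1 ≤ n * (y - 1) := Nat.mul_le_mul_left n (by omega)
              omega
        · by_cases hy0 : y = 0
          · subst hy0
            rw [hg0, hval x hx0 hx1] at hxy
            have h2 : n * 1 ≤ n * (x - 1) := Nat.mul_le_mul_left n (by omega)
            omega
          · by_cases hy1 : y = 1
            · subst hy1
              rw [hg1, hval x hx0 hx1] at hxy
              have h2 : n * 1 ≤ n * (x - 1) := Nat.mul_le_mul_left n (by omega)
              omega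
            · rw [hval x hx0 hx1, hval y hy0 hy1] at hxy
              have h2 : n * (x - 1) = n * (y - 1) := by omega
              have := Nat.eq_of_mul_eq_mul_left hn h2
              omega
    have key : ∀ j : Fin (L + 2),
        (if (j : ℕ) = 0 then e m
          else if (j : ℕ) = 1 then e n
          else ((l * e m + k) * (l * e n + k) ^ ((j : ℕ) - 1) - k) / l)
        = e (g (j : ℕ)) := by
      intro j
      simp only [hgdef]
      split_ifs with h0 h1
      · rfl
      · rfl
      · rw [hprod ((j : ℕ) - 1)]
    intro j1 j2 heq
    simp only [key] at heq
    exact Fin.ext (hginj _ _ (heinj heq))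
end

section
/- Let (ℓ_1,k_1),…,(ℓ_m,k_m) be pairs of integers such that for every j either ℓ_j ≠ 0 and ℓ_j divides k_j(k_j−1), or (ℓ_j,k_j) = (0,1); and let f : ℤ^m → ℤ be any function. Then for every finite coloring ℤ = C_1 ∪ … ∪ C_r there exist injective sequences of integers (x^{(j)}_n)_{n=1}^∞ for j = 1,…,m, with (x^{(j)}_n) = (x^{(j')}_n) whenever (ℓ_j,k_j) = (ℓ_{j'},k_{j'}), and a color C_i such that {f(x^{(1)}_{F_1},…,x^{(m)}_{F_m}) : F_1 < … < F_m} ⊆ C_i, where F_1,…,F_m range over nonempty finite subsets of ℕ with max F_j < min F_{j+1}, and for F = {n_1<…<n_s} one sets x^{(j)}_F = 𝔖_{ℓ_j,k_j}(x^{(j)}_{n_1},…,x^{(j)}_{n_s}). -/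
/-!
For an admissible pair `(ℓ, k)` the map `ψ a = ℓ a + k` (`ψ = exp` for `(0, 1)`) turns
`𝔖_{ℓ,k}` into a product: `ψ (𝔖_{ℓ,k}(a₁, …, aₙ)) = ∏ ψ aᵢ`. So it suffices to prove a
Milliken–Taylor theorem in the commutative monoid `ℝ^ι`, `ι` the set of distinct pairs, for an
idempotent ultrafilter `q` living on `∏ (ψ_p(ℤ) \ {0})` whose coordinate projections are
non-principal; such a `q` exists by Ellis–Numakura applied to the closed subsemigroup of
ultrafilters finer than the product of the filters `cofinite ⊓ 𝓟 (ψ_p(ℤ) \ {0})`. One colour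
class is `q^{⊗m}`-large, and the usual inductive choice of `y₀, y₁, …` through star sets
`B⋆ = {x ∈ B | x⁻¹B ∈ q}` puts all block products `(∏_{F₁} y, …, ∏_{F_m} y)`, `F₁ < ⋯ < F_m`,
into it; non-principality lets each `yₙ` avoid all earlier values coordinatewise. Pulling back
along `ψ` gives the sequences.
-/

open Filter Finset Function

namespace MillikenTaylor

def IsSymPair (l k : ℤ) : Prop := (l ≠ 0 ∧ l ∣ k * (k - 1)) ∨ (l = 0 ∧ k = 1)

theorem mul_symVal_add {l k : ℤ} (hlk : l ∣ k * (k - 1)) (x : ℕ → ℤ) {F : Finset ℕ}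
    (hF : F.Nonempty) : l * symVal l k x F + k = ∏ i ∈ F, (l * x i + k) := by
  have hdvd : l ∣ k ^ #F - k := by
    obtain ⟨n, hn⟩ := Nat.exists_eq_add_of_lt hF.card_pos
    have : k ^ #F - k = k * (k ^ n - 1 ^ n) := by rw [hn]; ring
    rw [this]
    exact hlk.trans (mul_dvd_mul_left k (sub_dvd_pow_sub_pow k 1 n))
  rw [prod_add, ← add_sum_erase _ _ (empty_mem_powerset F), symVal, filter_ne', mul_add,
    Int.mul_ediv_cancel' hdvd, mul_sum]
  simp only [prod_empty, sdiff_empty, prod_const, one_mul]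
  have hterms : ∑ G ∈ F.powerset.erase ∅, l * (l ^ (#G - 1) * k ^ (#F - #G) * ∏ i ∈ G, x i)
      = ∑ G ∈ F.powerset.erase ∅, (∏ i ∈ G, l * x i) * k ^ #(F \ G) := by
    refine sum_congr rfl fun G hG => ?_
    obtain ⟨hGne, hGF⟩ := mem_erase.1 hG
    rw [prod_mul_distrib, prod_const, card_sdiff_of_subset (mem_powerset.1 hGF)]
    have hpos := (nonempty_iff_ne_empty.2 hGne).card_pos
    rw [← Nat.sub_one_add_one hpos.ne', pow_succ', Nat.add_sub_cancel]
    ring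
  rw [hterms]
  ring

theorem symVal_zero_one (x : ℕ → ℤ) (F : Finset ℕ) : symVal 0 1 x F = ∑ i ∈ F, x i := by
  have hterm : ∀ G ∈ F.powerset.filter (· ≠ ∅),
      (0 : ℤ) ^ (#G - 1) * 1 ^ (#F - #G) * ∏ i ∈ G, x i = if #G = 1 then ∏ i ∈ G, x i else 0 := by
    intro G hG
    have hpos := (nonempty_iff_ne_empty.2 (mem_filter.1 hG).2).card_pos
    split_ifs with h1
    · simp [h1]
    · simp [zero_pow (show #G - 1 ≠ 0 by omega)]
  have hsingletons : (F.powerset.filter (· ≠ ∅)).filter (#· = 1) = F.powersetCard 1 := by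
    ext G
    simp only [mem_filter, mem_powerset, mem_powersetCard]
    constructor
    · exact fun h => ⟨h.1.1, h.2⟩
    · exact fun h => ⟨⟨h.1, fun h0 => by simp [h0] at h⟩, h.2⟩
  rw [symVal, sum_congr rfl hterm, ← sum_filter, hsingletons, powersetCard_one, sum_map]
  simp

noncomputable def symEmbed (l k : ℤ) (a : ℤ) : ℝ := if l = 0 then Real.exp a else l * a + k

theorem symEmbed_injective (l k : ℤ) : Injective (symEmbed l k) := by
  intro a b hab
  by_cases hl : l = 0
  · simp only [symEmbed, if_pos hl, Real.exp_eq_exp, Int.cast_inj] at hab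
    exact hab
  · rw [symEmbed, symEmbed, if_neg hl, if_neg hl, add_left_inj,
      mul_right_inj' (Int.cast_ne_zero.2 hl)] at hab
    exact_mod_cast hab

theorem symEmbed_symVal {l k : ℤ} (hlk : IsSymPair l k) (x : ℕ → ℤ) {F : Finset ℕ}
    (hF : F.Nonempty) : symEmbed l k (symVal l k x F) = ∏ i ∈ F, symEmbed l k (x i) := by
  rcases hlk with ⟨hl, hdvd⟩ | ⟨rfl, rfl⟩
  · simp only [symEmbed, if_neg hl]
    exact_mod_cast mul_symVal_add hdvd x hF
  · simp [symEmbed, symVal_zero_one, Real.exp_sum]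

theorem symEmbed_mul_mem_range {l k : ℤ} (hlk : IsSymPair l k) (a b : ℤ) :
    symEmbed l k a * symEmbed l k b ∈ Set.range (symEmbed l k) := by
  refine ⟨symVal l k (fun i => if i = 0 then a else b) {0, 1}, ?_⟩
  rw [symEmbed_symVal hlk _ (insert_nonempty 0 {1}), prod_pair zero_ne_one]
  simp

theorem symVal_invFun_eq {l k : ℤ} (hlk : IsSymPair l k) {z : ℕ → ℝ}
    (hz : ∀ n, z n ∈ Set.range (symEmbed l k)) {F : Finset ℕ} (hF : F.Nonempty) :
    symVal l k (fun n => invFun (symEmbed l k) (z n)) F = invFun (symEmbed l k) (∏ i ∈ F, z i) := by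
  rw [← (leftInverse_invFun (symEmbed_injective l k)) (symVal l k _ F), symEmbed_symVal hlk _ hF]
  simp only [invFun_eq (hz _)]

attribute [local instance] Ultrafilter.mul Ultrafilter.semigroup

theorem exists_idempotent_ultrafilter_le {M : Type*} [Semigroup M] {𝓕 : Filter M} [𝓕.NeBot]
    {S : Set M} (hS : S ∈ 𝓕) (hmul : ∀ a ∈ S, Tendsto (a * ·) 𝓕 𝓕) :
    ∃ U : Ultrafilter M, U * U = U ∧ ↑U ≤ 𝓕 := by
  have hclosed : IsClosed {U : Ultrafilter M | ↑U ≤ 𝓕} := by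
    simp only [Filter.le_def, Set.ofPred_forall]
    exact isClosed_iInter fun X => isClosed_iInter fun _ => ultrafilter_isClosed_basic X
  obtain ⟨U, hU, hUU⟩ := exists_idempotent_in_compact_subsemigroup Ultrafilter.continuous_mul_left
    _ ⟨Ultrafilter.of 𝓕, Ultrafilter.of_le 𝓕⟩ hclosed.isCompact fun U hU V hV X hX =>
      (Ultrafilter.eventually_mul U V (· ∈ X)).2 <|
        mem_of_superset (hU hS) fun a ha => hV (hmul a ha hX)
  exact ⟨U, hUU, hU⟩

theorem tendsto_mul_left_cofinite_inf_principal {M₀ : Type*} [Mul M₀] [Zero M₀]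
    [IsLeftCancelMulZero M₀] {I : Set M₀} (h0 : 0 ∉ I) (hI : ∀ a ∈ I, ∀ b ∈ I, a * b ∈ I)
    {a : M₀} (ha : a ∈ I) :
    Tendsto (a * ·) (cofinite ⊓ 𝓟 I) (cofinite ⊓ 𝓟 I) :=
  tendsto_inf.2 ⟨((mul_right_injective₀ (ne_of_mem_of_not_mem ha h0)).tendsto_cofinite).mono_left
    inf_le_left, tendsto_principal.2 (mem_inf_of_right fun b hb => hI a ha b hb)⟩

theorem exists_idempotent_ultrafilter_symEmbed {ι : Type*} [Finite ι] {κ : ι → ℤ × ℤ}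
    (hκ : ∀ i, IsSymPair (κ i).1 (κ i).2) :
    ∃ q : Ultrafilter (ι → ℝ), q * q = q ∧
      (∀ᶠ (t : ι → ℝ) in q, ∀ i, t i ∈ Set.range (symEmbed (κ i).1 (κ i).2)) ∧
      ∀ s : ι → ℝ, ∀ᶠ (t : ι → ℝ) in q, ∀ i, t i ≠ s i := by
  set I : ι → Set ℝ := fun i => Set.range (symEmbed (κ i).1 (κ i).2) \ {0}
  have hI_mul : ∀ i, ∀ a ∈ I i, ∀ b ∈ I i, a * b ∈ I i := by
    rintro i _ ⟨⟨a, rfl⟩, ha⟩ _ ⟨⟨b, rfl⟩, hb⟩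
    exact ⟨symEmbed_mul_mem_range (hκ i) a b, mul_ne_zero ha hb⟩
  have hI_inf : ∀ i, (I i).Infinite := fun i =>
    (Set.infinite_range_of_injective (symEmbed_injective _ _)).sdiff (Set.finite_singleton 0)
  have hneBot : ∀ i, (cofinite ⊓ 𝓟 (I i)).NeBot := fun i => (hI_inf i).cofinite_inf_principal_neBot
  obtain ⟨q, hq, hq_le⟩ := exists_idempotent_ultrafilter_le
    (pi_mem_pi Set.finite_univ fun i _ => mem_inf_of_right (mem_principal_self (I i)))
    fun a ha => tendsto_piMap_pi fun i =>
      tendsto_mul_left_cofinite_inf_principal (fun h => h.2 rfl) (hI_mul i) (ha i trivial)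
  have hcoord : ∀ i, ∀ s ∈ cofinite ⊓ 𝓟 (I i), ∀ᶠ (t : ι → ℝ) in q, t i ∈ s := fun i s hs =>
    hq_le (tendsto_eval_pi _ i hs)
  refine ⟨q, hq, eventually_all.2 fun i => ?_, fun s => eventually_all.2 fun i => ?_⟩
  · exact (hcoord i _ (mem_inf_of_right (mem_principal_self _))).mono fun _ h => h.1
  · exact hcoord i _ (mem_inf_of_left (Set.finite_singleton (s i)).compl_mem_cofinite)

theorem finite_setOf_forall_mem_length_lt {α : Type*} {s : Set α} (hs : s.Finite) (m : ℕ) :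
    {l : List α | (∀ x ∈ l, x ∈ s) ∧ l.length < m}.Finite := by
  have := hs.to_subtype
  refine ((List.finite_length_lt s m).image (List.map Subtype.val)).subset ?_
  rintro l ⟨hl, hlen⟩
  exact ⟨l.pmap Subtype.mk hl, by simpa using hlen, by simp [List.map_pmap]⟩

theorem exists_seq_of_forall_exists_update {α : Type*} (P : ℕ → (ℕ → α) → Prop)
    (hP : ∀ n y y', (∀ i < n, y i = y' i) → P n y → P n y') {y₀ : ℕ → α} (h₀ : P 0 y₀)
    (hstep : ∀ n y, P n y → ∃ a, P (n + 1) (update y n a)) : ∃ y, ∀ n, P n y := by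
  choose g hg using hstep
  let Y : (n : ℕ) → {y // P n y} := fun n => Nat.rec ⟨y₀, h₀⟩ (fun n y => ⟨_, hg n y.1 y.2⟩) n
  have hY : ∀ n, ∀ i < n, (Y n).1 i = (Y (i + 1)).1 i := by
    intro n
    induction n with
    | zero => exact fun i hi => absurd hi (Nat.not_lt_zero i)
    | succ n ih =>
      intro i hi
      rcases Nat.lt_succ_iff_lt_or_eq.1 hi with hi | rfl
      · exact (update_of_ne hi.ne _ _).trans (ih i hi)
      · rfl
  exact ⟨fun i => (Y (i + 1)).1 i, fun n => hP n _ _ (hY n) (Y n).2⟩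

/-- The tensor power `q ⊗ ⋯ ⊗ q` with `m` factors, realised on lists of length `m`. -/
noncomputable def listPow {M : Type*} (q : Ultrafilter M) : ℕ → Ultrafilter (List M)
  | 0 => pure []
  | m + 1 => q.bind fun a => (listPow q m).map (List.cons a)

section

variable {M : Type*} {q : Ultrafilter M}

theorem mem_listPow_zero {X : Set (List M)} : X ∈ listPow q 0 ↔ [] ∈ X := Ultrafilter.mem_pure

theorem mem_listPow_succ {m : ℕ} {X : Set (List M)} :
    X ∈ listPow q (m + 1) ↔ ∀ᶠ a in q, {v | a :: v ∈ X} ∈ listPow q m := Iff.rfl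

def starSet [Mul M] (q : Ultrafilter M) (B : Set M) : Set M := {x | x ∈ B ∧ ∀ᶠ y in q, x * y ∈ B}

theorem starSet_subset [Mul M] (B : Set M) : starSet q B ⊆ B := fun _ hx => hx.1

theorem starSet_mem [Semigroup M] (hq : q * q = q) {B : Set M} (hB : B ∈ q) :
    starSet q B ∈ q := by
  refine inter_mem hB ((Ultrafilter.eventually_mul q q (· ∈ B)).1 ?_)
  rwa [hq]

theorem eventually_mul_mem_starSet [Semigroup M] (hq : q * q = q) {B : Set M} {x : M}
    (hx : x ∈ starSet q B) : ∀ᶠ y in q, x * y ∈ starSet q B := by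
  have hx₂ : ∀ᶠ y in q, ∀ᶠ z in q, x * y * z ∈ B := by
    simpa only [mul_assoc] using
      (Ultrafilter.eventually_mul q q (x * · ∈ B)).1 (by rw [hq]; exact hx.2)
  filter_upwards [hx.2, hx₂] with y h₁ h₂ using ⟨h₁, h₂⟩

def BlockLT (F G : Finset ℕ) : Prop := ∀ a ∈ F, ∀ b ∈ G, a < b

def IsBlockList (Fs : List (Finset ℕ)) : Prop := Fs.Pairwise BlockLT ∧ ∀ F ∈ Fs, F.Nonempty

theorem isBlockList_append_singleton {Fs : List (Finset ℕ)} {G : Finset ℕ} :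
    IsBlockList (Fs ++ [G]) ↔ IsBlockList Fs ∧ G.Nonempty ∧ ∀ F ∈ Fs, BlockLT F G := by
  simp only [IsBlockList, List.pairwise_append, List.pairwise_singleton, List.mem_singleton,
    forall_eq, List.mem_append, or_imp, forall_and, true_and]
  tauto

def blockProds [CommMonoid M] (y : ℕ → M) (Fs : List (Finset ℕ)) : List M :=
  Fs.map fun F => ∏ i ∈ F, y i

theorem prod_congr_of_subset_range [CommMonoid M] {n : ℕ} {y y' : ℕ → M}
    (hy : ∀ i < n, y i = y' i) {F : Finset ℕ} (hF : F ⊆ range n) : ∏ i ∈ F, y i = ∏ i ∈ F, y' i :=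
  prod_congr rfl fun i hi => hy i (mem_range.1 (hF hi))

theorem blockProds_congr [CommMonoid M] {n : ℕ} {y y' : ℕ → M} (hy : ∀ i < n, y i = y' i)
    {Fs : List (Finset ℕ)} (hFs : ∀ F ∈ Fs, F ⊆ range n) : blockProds y Fs = blockProds y' Fs :=
  List.map_congr_left fun F hF => prod_congr_of_subset_range hy (hFs F hF)

variable (q) (m : ℕ) (X : Set (List M))

def Extendable (a : List M) : Prop := {v | a ++ v ∈ X} ∈ listPow q (m - a.length)

def nextSet (a : List M) : Set M := {b | Extendable q m X (a ++ [b])}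

variable {q m X}

theorem nextSet_mem {a : List M} (ha : Extendable q m X a) (hlen : a.length < m) :
    nextSet q m X a ∈ q := by
  obtain ⟨d, hd⟩ : ∃ d, m - a.length = d + 1 := ⟨m - a.length - 1, by omega⟩
  rw [Extendable, hd, mem_listPow_succ] at ha
  filter_upwards [ha] with b hb
  simpa [nextSet, Extendable, show m - (a.length + 1) = d by omega] using hb

theorem mem_of_extendable {a : List M} (ha : Extendable q m X a) (hlen : a.length = m) :
    a ∈ X := by
  rw [Extendable, hlen, Nat.sub_self, mem_listPow_zero] at ha
  simpa using ha

variable [CommMonoid M] (q m X)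

/-- The invariant of the construction once `y 0, …, y (n-1)` are chosen: the product over a
block `G` placed after the blocks `Fs` is an admissible next value, and stays admissible when
multiplied by a `q`-typical element. -/
def StarCondition (n : ℕ) (y : ℕ → M) : Prop :=
  ∀ Fs G, IsBlockList (Fs ++ [G]) → (∀ F ∈ Fs ++ [G], F ⊆ range n) → Fs.length < m →
    ∏ i ∈ G, y i ∈ starSet q (nextSet q m X (blockProds y Fs))

variable {q m X}

theorem StarCondition.extendable (hX : X ∈ listPow q m) {n : ℕ} {y : ℕ → M}
    (hS : StarCondition q m X n y) {Fs : List (Finset ℕ)} (hFs : IsBlockList Fs)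
    (hrange : ∀ F ∈ Fs, F ⊆ range n) (hlen : Fs.length ≤ m) :
    Extendable q m X (blockProds y Fs) := by
  rcases Fs.eq_nil_or_concat with rfl | ⟨Fs, G, rfl⟩
  · simpa [Extendable, blockProds] using hX
  · rw [List.concat_eq_append] at *
    have hG := hS Fs G hFs hrange (by simp at hlen; omega)
    simpa [nextSet, blockProds] using starSet_subset _ hG

theorem StarCondition.congr {n : ℕ} {y y' : ℕ → M} (hy : ∀ i < n, y i = y' i)
    (hS : StarCondition q m X n y) : StarCondition q m X n y' := by
  intro Fs G hFsG hrange hlen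
  rw [← prod_congr_of_subset_range hy (hrange G (by simp)),
    ← blockProds_congr hy fun F hF => hrange F (by simp [hF])]
  exact hS Fs G hFsG hrange hlen

theorem starCondition_zero (y : ℕ → M) : StarCondition q m X 0 y := by
  intro Fs G hFsG hrange
  obtain ⟨b, hb⟩ := (isBlockList_append_singleton.1 hFsG).2.1
  simpa using hrange G (by simp) hb

theorem StarCondition.succ_update {n : ℕ} {y : ℕ → M} (hS : StarCondition q m X n y) {z : M}
    (hnew : ∀ Fs, IsBlockList Fs → (∀ F ∈ Fs, F ⊆ range n) → Fs.length < m →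
      z ∈ starSet q (nextSet q m X (blockProds y Fs)))
    (hext : ∀ Fs G, IsBlockList (Fs ++ [G]) → (∀ F ∈ Fs ++ [G], F ⊆ range n) → Fs.length < m →
      (∏ i ∈ G, y i) * z ∈ starSet q (nextSet q m X (blockProds y Fs))) :
    StarCondition q m X (n + 1) (Function.update y n z) := by
  intro Fs G hFsG hrange hlen
  obtain ⟨hFs, ⟨b, hb⟩, hlt⟩ := isBlockList_append_singleton.1 hFsG
  have hG_range : G ⊆ range (n + 1) := hrange G (by simp)
  have hFs_range : ∀ F ∈ Fs, F ⊆ range n := fun F hF a ha => by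
    have := hlt F hF a ha b hb
    have := mem_range.1 (hG_range hb)
    exact mem_range.2 (by omega)
  have hrange' : ∀ G', G' ⊆ range n → ∀ F ∈ Fs ++ [G'], F ⊆ range n := fun G' hG' F hF => by
    rcases List.mem_append.1 hF with hF | hF
    exacts [hFs_range F hF, List.mem_singleton.1 hF ▸ hG']
  have hy : ∀ i < n, Function.update y n z i = y i := fun i hi => update_of_ne hi.ne _ _
  rw [blockProds_congr hy hFs_range]
  by_cases hn : n ∈ G
  · have hG' : G.erase n ⊆ range n := fun i hi => by
      have := mem_range.1 (hG_range (mem_of_mem_erase hi))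
      exact mem_range.2 (by have := ne_of_mem_erase hi; omega)
    rw [← prod_erase_mul _ _ hn, update_self, prod_congr_of_subset_range hy hG']
    rcases (G.erase n).eq_empty_or_nonempty with h | h
    · rw [h, prod_empty, one_mul]
      exact hnew Fs hFs hFs_range hlen
    · refine hext Fs _ ?_ (hrange' _ hG') hlen
      exact isBlockList_append_singleton.2
        ⟨hFs, h, fun F hF a ha c hc => hlt F hF a ha c (mem_of_mem_erase hc)⟩
  · have hGn : G ⊆ range n := fun i hi => by
      have := mem_range.1 (hG_range hi)
      exact mem_range.2 (by have : i ≠ n := fun h => hn (h ▸ hi); omega)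
    rw [prod_congr_of_subset_range hy hGn]
    exact hS Fs G hFsG (hrange' G hGn) hlen

theorem StarCondition.exists_update (hq : q * q = q) (hX : X ∈ listPow q m) {n : ℕ}
    {y : ℕ → M} (hS : StarCondition q m X n y) {p : M → Prop} (hp : ∀ᶠ z in q, p z) :
    ∃ z, p z ∧ StarCondition q m X (n + 1) (Function.update y n z) := by
  have hsmall : {F : Finset ℕ | F ⊆ range n}.Finite :=
    (range n).powerset.finite_toSet.subset fun F hF => mem_coe.2 (mem_powerset.2 hF)
  have hlists := finite_setOf_forall_mem_length_lt hsmall m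
  set 𝔅 := {Fs | IsBlockList Fs ∧ (∀ F ∈ Fs, F ⊆ range n) ∧ Fs.length < m}
  set 𝔓 := {P : List (Finset ℕ) × Finset ℕ |
    IsBlockList (P.1 ++ [P.2]) ∧ (∀ F ∈ P.1 ++ [P.2], F ⊆ range n) ∧ P.1.length < m}
  have h𝔅 : 𝔅.Finite := hlists.subset fun Fs hFs => hFs.2
  have h𝔓 : 𝔓.Finite := (hlists.prod hsmall).subset fun P hP =>
    ⟨⟨fun F hF => hP.2.1 F (by simp [hF]), hP.2.2⟩, hP.2.1 P.2 (by simp)⟩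
  have hnew : ∀ᶠ z in q, ∀ Fs ∈ 𝔅, z ∈ starSet q (nextSet q m X (blockProds y Fs)) :=
    (eventually_all_finite h𝔅).2 fun Fs hFs => starSet_mem hq <|
      nextSet_mem (hS.extendable hX hFs.1 hFs.2.1 hFs.2.2.le) (by simpa [blockProds] using hFs.2.2)
  have hext : ∀ᶠ z in q, ∀ P ∈ 𝔓,
      (∏ i ∈ P.2, y i) * z ∈ starSet q (nextSet q m X (blockProds y P.1)) :=
    (eventually_all_finite h𝔓).2 fun P hP =>
      eventually_mul_mem_starSet hq (hS _ _ hP.1 hP.2.1 hP.2.2)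
  obtain ⟨z, hz, hz_new, hz_ext⟩ := (hp.and (hnew.and hext)).exists
  exact ⟨z, hz, hS.succ_update (fun Fs h₁ h₂ h₃ => hz_new Fs ⟨h₁, h₂, h₃⟩)
    fun Fs G h₁ h₂ h₃ => hz_ext (Fs, G) ⟨h₁, h₂, h₃⟩⟩

theorem exists_seq_blockProds_mem (hq : q * q = q) (hX : X ∈ listPow q m) {A : Set M}
    (hA : A ∈ q) {R : M → M → Prop} (hR : ∀ s, ∀ᶠ t in q, R s t) :
    ∃ y : ℕ → M, (∀ n, y n ∈ A) ∧ (∀ i j, i < j → R (y i) (y j)) ∧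
      ∀ Fs, IsBlockList Fs → Fs.length = m → blockProds y Fs ∈ X := by
  set Inv : ℕ → (ℕ → M) → Prop :=
    fun n y => (∀ j < n, y j ∈ A ∧ ∀ i < j, R (y i) (y j)) ∧ StarCondition q m X n y
  have hlocal : ∀ n y y', (∀ i < n, y i = y' i) → Inv n y → Inv n y' :=
    fun n y y' hyy' ⟨hfresh, hS⟩ => ⟨fun j hj => by
      rw [← hyy' j hj]
      exact ⟨(hfresh j hj).1, fun i hi => by
        rw [← hyy' i (hi.trans hj)]; exact (hfresh j hj).2 i hi⟩,
      hS.congr hyy'⟩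
  have hstep : ∀ n y, Inv n y → ∃ z, Inv (n + 1) (Function.update y n z) := by
    intro n y ⟨hfresh, hS⟩
    have hfresh_next : ∀ᶠ z in q, z ∈ A ∧ ∀ i < n, R (y i) z :=
      (show ∀ᶠ z in q, z ∈ A from hA).and
        ((eventually_all_finite (Set.finite_lt_nat n)).2 fun i _ => hR (y i))
    obtain ⟨z, ⟨hzA, hzR⟩, hS'⟩ := hS.exists_update hq hX hfresh_next
    refine ⟨z, fun j hj => ?_, hS'⟩
    have hy : ∀ i < n, Function.update y n z i = y i := fun i hi => update_of_ne hi.ne _ _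
    rcases Nat.lt_succ_iff_lt_or_eq.1 hj with hj | rfl
    · rw [hy j hj]
      exact ⟨(hfresh j hj).1, fun i hi => by rw [hy i (hi.trans hj)]; exact (hfresh j hj).2 i hi⟩
    · rw [update_self]
      exact ⟨hzA, fun i hi => by rw [hy i hi]; exact hzR i hi⟩
  obtain ⟨y, hy⟩ := exists_seq_of_forall_exists_update Inv hlocal (y₀ := fun _ => 1)
    ⟨fun j hj => absurd hj (Nat.not_lt_zero j), starCondition_zero _⟩ hstep
  refine ⟨y, fun n => ((hy (n + 1)).1 n n.lt_succ_self).1,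
    fun i j hij => ((hy (j + 1)).1 j j.lt_succ_self).2 i hij, fun Fs hFs hlen => ?_⟩
  obtain ⟨n, hn⟩ := (Fs.toFinset.sup id).exists_nat_subset_range
  have hrange : ∀ F ∈ Fs, F ⊆ range n := fun F hF =>
    (le_sup (f := id) (List.mem_toFinset.2 hF)).trans hn
  exact mem_of_extendable ((hy n).2.extendable hX hFs hrange hlen.le) (by simp [blockProds, hlen])

end

theorem exists_seq_symVal_mem {ι : Type*} [Finite ι] {κ : ι → ℤ × ℤ}
    (hκ : ∀ p, IsSymPair (κ p).1 (κ p).2) {m : ℕ} (e : Fin m → ι) (g : (Fin m → ℤ) → ℤ)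
    {r : ℕ} {C : Fin r → Set ℤ} (hC : ⋃ i, C i = Set.univ) :
    ∃ x : ι → ℕ → ℤ, (∀ p, Injective (x p)) ∧ ∃ i, ∀ F : Fin m → Finset ℕ,
      (∀ j, (F j).Nonempty) → (∀ j j', j < j' → BlockLT (F j) (F j')) →
      g (fun j => symVal (κ (e j)).1 (κ (e j)).2 (x (e j)) (F j)) ∈ C i := by
  obtain ⟨q, hq, hrange, hfresh⟩ := exists_idempotent_ultrafilter_symEmbed hκ
  set ψ := fun p => symEmbed (κ p).1 (κ p).2
  set decode : List (ι → ℝ) → Fin m → ℤ := fun v j => invFun (ψ (e j)) (v.getD j 1 (e j))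
  obtain ⟨i, hi⟩ : ∃ i, {v | g (decode v) ∈ C i} ∈ listPow q m :=
    Ultrafilter.eventually_exists_iff.1 <| Eventually.of_forall fun v =>
      Set.mem_iUnion.1 (hC ▸ Set.mem_univ (g (decode v)))
  obtain ⟨y, hy_range, hy_ne, hy_mem⟩ := exists_seq_blockProds_mem hq hi hrange hfresh
  refine ⟨fun p n => invFun (ψ p) (y n p), fun p => Injective.of_lt_imp_ne fun a b hab h => ?_,
    i, fun F hF hFlt => ?_⟩
  · refine hy_ne a b hab p ?_
    rw [← invFun_eq (hy_range b p), ← invFun_eq (hy_range a p)]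
    exact congrArg (ψ p) h.symm
  · have hblocks : IsBlockList (List.ofFn F) :=
      ⟨List.pairwise_ofFn.2 hFlt, List.forall_mem_ofFn_iff.2 hF⟩
    have hmem := hy_mem _ hblocks (List.length_ofFn)
    simp only [Set.mem_ofPred_eq, blockProds, List.map_ofFn, decode] at hmem
    convert hmem using 2
    funext j
    rw [List.getD_eq_getElem _ _ (by simp), List.getElem_ofFn, Function.comp_apply,
      Finset.prod_apply, symVal_invFun_eq (hκ (e j)) (fun n => hy_range n (e j)) (hF j)]

end MillikenTaylor

/-- Milliken–Taylor-type theorem for symmetric systems on ℤ. -/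
theorem milliken_taylor_type_int (m : ℕ) (l k : Fin m → ℤ)
    (h : ∀ j, (l j ≠ 0 ∧ l j ∣ k j * (k j - 1)) ∨ (l j = 0 ∧ k j = 1))
    (f : (Fin m → ℤ) → ℤ) (r : ℕ) (C : Fin r → Set ℤ)
    (hC : (⋃ i, C i) = (Set.univ : Set ℤ)) :
    ∃ x : Fin m → ℕ → ℤ,
      (∀ j, Function.Injective (x j)) ∧
      (∀ j j', l j = l j' → k j = k j' → x j = x j') ∧
      ∃ i : Fin r, ∀ F : Fin m → Finset ℕ,
        (∀ j, (F j).Nonempty) →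
        (∀ j j', j < j' → ∀ a ∈ F j, ∀ b ∈ F j', a < b) →
        f (fun j => symVal (l j) (k j) (x j) (F j)) ∈ C i := by
  obtain ⟨x, hx_inj, i, hx⟩ := MillikenTaylor.exists_seq_symVal_mem (κ := Subtype.val)
    (ι := Set.range fun j => (l j, k j)) (by rintro ⟨_, j, rfl⟩; exact h j)
    (fun j => ⟨(l j, k j), j, rfl⟩) f hC
  exact ⟨fun j => x ⟨(l j, k j), j, rfl⟩, fun j => hx_inj _,
    fun j j' hl hk => congrArg x (Subtype.ext (Prod.ext hl hk)), i, hx⟩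
end

section
/- Let (ℓ_1,k_1),…,(ℓ_m,k_m) be pairs of integers such that for every j either ℓ_j > 0 and k_j ∈ {0,1}, or (ℓ_j,k_j) = (0,1). Let f be an m-variable function, defined at least on all m-tuples of positive integers and with integer values, satisfying condition (‡): there exist n̄_1, N_1 ∈ ℕ such that for all n_1 ≥ n̄_1 there exist n̄_2, N_2 ∈ ℕ (depending on n_1) such that for all n_2 ≥ n̄_2, …, there exist n̄_m, N_m ∈ ℕ such that for all n_m ≥ n̄_m, one has f(n_1 N_1, n_2 N_2, …, n_m N_m) ∈ ℕ. Then for every finite coloring ℕ = C_1 ∪ … ∪ C_r of the positive integers there exist injective sequences of positive integers (x^{(j)}_n)_{n=1}^∞ for j = 1,…,m, with (x^{(j)}_n) = (x^{(j')}_n) whenever (ℓ_j,k_j) = (ℓ_{j'},k_{j'}), and a color C_i such that {f(x^{(1)}_{F_1},…,x^{(m)}_{F_m}) : F_1 < … < F_m} ⊆ C_i, where F_1,…,F_m range over nonempty finite subsets of ℕ with max F_j < min F_{j+1}, and for F = {n_1<…<n_s} one sets x^{(j)}_F = 𝔖_{ℓ_j,k_j}(x^{(j)}_{n_1},…,x^{(j)}_{n_s}).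 -/
/-- Condition (‡) for a property Q of m-tuples of positive integers:
∃ n̄₁,N₁ ∀ n₁ ≥ n̄₁ ∃ n̄₂,N₂ ∀ n₂ ≥ n̄₂ … ∃ n̄_m,N_m ∀ n_m ≥ n̄_m, Q(n₁N₁,…,n_mN_m). -/
def DDagger : (m : ℕ) → ((Fin m → ℕ) → Prop) → Prop
  | 0, Q => Q Fin.elim0
  | m + 1, Q => ∃ nbar N : ℕ, 0 < nbar ∧ 0 < N ∧
      ∀ n : ℕ, nbar ≤ n → DDagger m (fun v => Q (Fin.cons (n * N) v))

namespace MT16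

open Filter

def opP (l k : ℤ) (a b : ℤ) : ℤ := k * (a + b) + l * (a * b)

def validP (l k : ℤ) : Prop := (0 < l ∧ (k = 0 ∨ k = 1)) ∨ (l = 0 ∧ k = 1)

lemma validP.k01 {l k : ℤ} (h : validP l k) : k = 0 ∨ k = 1 := by
  rcases h with ⟨_, h⟩ | ⟨_, h⟩ <;> tauto

lemma validP.l_nonneg {l k : ℤ} (h : validP l k) : 0 ≤ l := by
  rcases h with ⟨h, _⟩ | ⟨h, _⟩ <;> omega

lemma opP_comm (l k a b : ℤ) : opP l k a b = opP l k b a := by unfold opP; ring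

lemma opP_assoc {l k : ℤ} (hk : k = 0 ∨ k = 1) (a b c : ℤ) :
    opP l k (opP l k a b) c = opP l k a (opP l k b c) := by
  rcases hk with rfl | rfl <;> (unfold opP; ring)

lemma opP_key {l k : ℤ} (hk : k = 0 ∨ k = 1) (a b : ℤ) :
    l * opP l k a b + k = (l * a + k) * (l * b + k) := by
  rcases hk with rfl | rfl <;> (unfold opP; ring)

lemma symVal_eq_sum {l k : ℤ} (hk : k = 0 ∨ k = 1) (x : ℕ → ℤ) {F : Finset ℕ}
    (hF : F.Nonempty) :
    symVal l k x F =
      ∑ G ∈ F.powerset.filter (fun G => G ≠ ∅),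
        l ^ (G.card - 1) * k ^ (F.card - G.card) * ∏ i ∈ G, x i := by
  have hc : F.card ≠ 0 := by simpa using hF.card_pos.ne'
  rcases hk with rfl | rfl
  · rw [symVal, zero_pow hc]; simp
  · rw [symVal, one_pow]; simp

lemma symVal_char {l k : ℤ} (hk : k = 0 ∨ k = 1) (x : ℕ → ℤ) {F : Finset ℕ}
    (hF : F.Nonempty) :
    l * symVal l k x F + k ^ F.card = ∏ i ∈ F, (l * x i + k) := by
  rw [symVal_eq_sum hk x hF]
  rw [Finset.prod_add]
  have h1 : ∀ G ∈ F.powerset, (∏ i ∈ G, l * x i) * ∏ _i ∈ F \ G, k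
      = l ^ G.card * k ^ (F.card - G.card) * ∏ i ∈ G, x i := by
    intro G hG
    rw [Finset.mem_powerset] at hG
    rw [Finset.prod_mul_distrib, Finset.prod_const, Finset.prod_const,
      Finset.card_sdiff_of_subset hG]
    ring
  rw [Finset.sum_congr rfl h1]
  have h2 : F.powerset.filter (fun G => G ≠ ∅) = F.powerset.erase ∅ := by
    rw [Finset.filter_ne']
  have h3 : ∅ ∈ F.powerset := Finset.empty_mem_powerset F
  rw [← Finset.sum_erase_add _ _ h3]
  have h4 : (∑ G ∈ F.powerset.erase ∅, l ^ G.card * k ^ (F.card - G.card) * ∏ i ∈ G, x i)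
      = l * ∑ G ∈ F.powerset.filter (fun G => G ≠ ∅),
          l ^ (G.card - 1) * k ^ (F.card - G.card) * ∏ i ∈ G, x i := by
    rw [h2, Finset.mul_sum]
    refine Finset.sum_congr rfl ?_
    intro G hG
    have hGne : G ≠ ∅ := Finset.ne_of_mem_erase hG
    have hcard : G.card ≠ 0 := by
      simpa using (Finset.nonempty_of_ne_empty hGne).card_pos.ne'
    have hl : l ^ G.card = l * l ^ (G.card - 1) := by
      conv_lhs => rw [show G.card = (G.card - 1) + 1 by omega]
      rw [pow_succ]; ring
    rw [hl]; ring
  rw [h4]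
  simp

lemma symVal_singleton {l k : ℤ} (hk : k = 0 ∨ k = 1) (x : ℕ → ℤ) (a : ℕ) :
    symVal l k x {a} = x a := by
  rw [symVal_eq_sum hk x (Finset.singleton_nonempty a)]
  have hps : ({a} : Finset ℕ).powerset = {∅, {a}} := by
    rw [show ({a} : Finset ℕ) = insert a ∅ by simp, Finset.powerset_insert,
      Finset.powerset_empty]
    rfl
  rw [hps, Finset.filter_insert, if_neg (by simp), Finset.filter_singleton,
    if_pos (by simp)]
  simp

lemma symVal_zero_one (x : ℕ → ℤ) {F : Finset ℕ} (hF : F.Nonempty) :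
    symVal 0 1 x F = ∑ i ∈ F, x i := by
  rw [symVal_eq_sum (Or.inr rfl) x hF]
  have hsub : F.powersetCard 1 ⊆ F.powerset.filter (fun G => G ≠ ∅) := by
    intro G hG
    rw [Finset.mem_powersetCard] at hG
    rw [Finset.mem_filter, Finset.mem_powerset]
    refine ⟨hG.1, ?_⟩
    intro he
    rw [he] at hG
    simp at hG
  rw [← Finset.sum_subset hsub]
  · rw [Finset.powersetCard_one, Finset.sum_map]
    refine Finset.sum_congr rfl ?_
    intro i _
    simp
  · intro G hG hG1
    rw [Finset.mem_filter] at hG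
    rw [Finset.mem_powersetCard] at hG1
    have h2 : 2 ≤ G.card := by
      have h0 : G.card ≠ 0 := by
        simpa using (Finset.nonempty_of_ne_empty hG.2).card_pos.ne'
      have h1 : G.card ≠ 1 := fun hc => hG1 ⟨Finset.mem_powerset.mp hG.1, hc⟩
      omega
    rw [zero_pow (by omega : G.card - 1 ≠ 0)]
    ring

lemma symVal_insert {l k : ℤ} (hv : validP l k) (x : ℕ → ℤ) {F : Finset ℕ} {a : ℕ}
    (ha : a ∉ F) (hF : F.Nonempty) :
    symVal l k x (insert a F) = opP l k (x a) (symVal l k x F) := by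
  rcases hv with ⟨hl, hk⟩ | ⟨rfl, rfl⟩
  · apply mul_left_cancel₀ (a := l) hl.ne'
    have h1 := symVal_char (l := l) hk x (Finset.insert_nonempty a F)
    have h2 := symVal_char (l := l) hk x hF
    have hcard : (insert a F).card = F.card + 1 := Finset.card_insert_of_notMem ha
    have hprod : ∏ i ∈ insert a F, (l * x i + k) = (l * x a + k) * ∏ i ∈ F, (l * x i + k) :=
      Finset.prod_insert ha
    have hkey := opP_key (l := l) hk (x a) (symVal l k x F)
    have hkn : k ^ F.card = k := by
      rcases hk with rfl | rfl
      · rw [zero_pow (by simpa using hF.card_pos.ne')]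
      · simp
    have hkk : k * k = k := by rcases hk with rfl | rfl <;> ring
    have e1 : l * symVal l k x (insert a F)
        = (l * x a + k) * (l * symVal l k x F + k ^ F.card) - k ^ (F.card + 1) := by
      rw [h2, ← hprod, ← h1, hcard]; ring
    rw [hkn] at e1
    rw [e1, ← hkey, pow_succ, hkn]
    linarith [hkk]
  · rw [symVal_zero_one x (Finset.insert_nonempty a F), symVal_zero_one x hF,
      Finset.sum_insert ha]
    unfold opP; ring

lemma symVal_congr {l k : ℤ} {x x' : ℕ → ℤ} {F : Finset ℕ}
    (hx : ∀ i ∈ F, x i = x' i) : symVal l k x F = symVal l k x' F := by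
  unfold symVal
  congr 1
  refine Finset.sum_congr rfl ?_
  intro G hG
  rw [Finset.mem_filter, Finset.mem_powerset] at hG
  rw [Finset.prod_congr rfl (fun i hi => hx i (hG.1 hi))]

def Mset (N nb : ℕ) : Set ℤ := {z | ∃ n : ℕ, nb ≤ n ∧ z = (n : ℤ) * N}

def inClub (U : Ultrafilter ℤ) : Prop := ∀ N nb : ℕ, 0 < N → 0 < nb → Mset N nb ∈ U

def isIdem (o : ℤ → ℤ → ℤ) (U : Ultrafilter ℤ) : Prop :=
  ∀ S : Set ℤ, S ∈ U ↔ {a | {b | o a b ∈ S} ∈ U} ∈ U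

lemma Mset_subset {N N' nb nb' : ℕ} (hN' : 0 < N') (hb : nb ≤ nb') :
    Mset (N * N') nb' ⊆ Mset N nb := by
  rintro z ⟨n, hn, rfl⟩
  refine ⟨n * N', ?_, by push_cast; ring⟩
  calc nb ≤ nb' := hb
    _ ≤ n := hn
    _ ≤ n * N' := Nat.le_mul_of_pos_right n hN'

lemma Mset_nonempty (N nb : ℕ) : (Mset N nb).Nonempty :=
  ⟨(nb : ℤ) * N, nb, le_rfl, rfl⟩

lemma Mset_pos {N nb : ℕ} (hN : 0 < N) (hb : 0 < nb) {z : ℤ} (hz : z ∈ Mset N nb) :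
    0 < z := by
  obtain ⟨n, hn, rfl⟩ := hz
  have : 0 < n := lt_of_lt_of_le hb hn
  positivity

lemma exists_club : ∃ U : Ultrafilter ℤ, inClub U := by
  have hdir : Directed (· ≥ ·) (fun p : ℕ × ℕ => 𝓟 (Mset (p.1 + 1) (p.2 + 1))) := by
    intro p q
    refine ⟨((p.1 + 1) * (q.1 + 1) - 1, max p.2 q.2), ?_, ?_⟩
    · refine Filter.principal_mono.mpr ?_
      have h1 : (p.1 + 1) * (q.1 + 1) - 1 + 1 = (p.1 + 1) * (q.1 + 1) := by
        have : 1 ≤ (p.1 + 1) * (q.1 + 1) := Nat.one_le_iff_ne_zero.mpr (by positivity)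
        omega
      rw [h1]
      exact Mset_subset (Nat.succ_pos _) (by omega)
    · refine Filter.principal_mono.mpr ?_
      have h1 : (p.1 + 1) * (q.1 + 1) - 1 + 1 = (q.1 + 1) * (p.1 + 1) := by
        have : 1 ≤ (p.1 + 1) * (q.1 + 1) := Nat.one_le_iff_ne_zero.mpr (by positivity)
        rw [Nat.mul_comm (q.1 + 1) (p.1 + 1)]; omega
      rw [h1]
      exact Mset_subset (Nat.succ_pos _) (by omega)
  have hne : ∀ p : ℕ × ℕ, (𝓟 (Mset (p.1 + 1) (p.2 + 1))).NeBot :=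
    fun p => Filter.principal_neBot_iff.mpr (Mset_nonempty _ _)
  haveI : (⨅ p : ℕ × ℕ, 𝓟 (Mset (p.1 + 1) (p.2 + 1))).NeBot :=
    Filter.iInf_neBot_of_directed' hdir hne
  obtain ⟨U, hU⟩ := Ultrafilter.exists_le (⨅ p : ℕ × ℕ, 𝓟 (Mset (p.1 + 1) (p.2 + 1)))
  refine ⟨U, fun N nb hN hb => ?_⟩
  have hmem : Mset (N - 1 + 1) (nb - 1 + 1) ∈ ⨅ p : ℕ × ℕ, 𝓟 (Mset (p.1 + 1) (p.2 + 1)) :=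
    Filter.mem_iInf_of_mem (N - 1, nb - 1) (Filter.mem_principal_self _)
  have h1 : N - 1 + 1 = N := by omega
  have h2 : nb - 1 + 1 = nb := by omega
  rw [h1, h2] at hmem
  exact hU hmem

lemma opP_Mset {l k : ℤ} (hv : validP l k) {N nb : ℕ} (hN : 0 < N) (hb : 0 < nb)
    {a b : ℤ} (ha : a ∈ Mset N nb) (hb' : b ∈ Mset N nb) : opP l k a b ∈ Mset N nb := by
  obtain ⟨n, hn, rfl⟩ := ha
  obtain ⟨n', hn', rfl⟩ := hb'
  have hk0 : 0 ≤ k := by rcases hv with ⟨_, h⟩ | ⟨_, h⟩ <;> omega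
  have hl0 : 0 ≤ l := by rcases hv with ⟨h, _⟩ | ⟨h, _⟩ <;> omega
  refine ⟨k.toNat * (n + n') + l.toNat * n * n' * N, ?_, ?_⟩
  · rcases hv with ⟨hl, hk⟩ | ⟨hl, hk⟩
    · rcases hk with rfl | rfl
      · simp only [Int.toNat_zero, Nat.zero_mul, Nat.zero_add]
        have h1 : 1 ≤ l.toNat := by omega
        calc nb ≤ n := hn
          _ = 1 * n * 1 * 1 := by ring
          _ ≤ l.toNat * n * n' * N := by
              apply Nat.mul_le_mul (Nat.mul_le_mul (Nat.mul_le_mul h1 le_rfl) (by omega)) hN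
      · simp only [Int.toNat_one, Nat.one_mul]
        exact le_trans (by omega : nb ≤ n + n') (Nat.le_add_right _ _)
    · subst hl; rw [hk]; simp only [Int.toNat_one, Nat.one_mul, Int.toNat_zero, Nat.zero_mul]
      omega
  · have hkc : ((k.toNat : ℤ)) = k := Int.toNat_of_nonneg hk0
    have hlc : ((l.toNat : ℤ)) = l := Int.toNat_of_nonneg hl0
    unfold opP
    push_cast [hkc, hlc]
    ring

lemma exists_idem_club {l k : ℤ} (hv : validP l k) :
    ∃ U : Ultrafilter ℤ, inClub U ∧ isIdem (opP l k) U := by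
  classical
  letI : Mul (Ultrafilter ℤ) := ⟨fun U V => opP l k <$> U <*> V⟩
  have hev : ∀ (U V : Ultrafilter ℤ) (p : ℤ → Prop),
      (∀ᶠ z in ↑(U * V), p z) ↔ ∀ᶠ a in U, ∀ᶠ b in V, p (opP l k a b) :=
    fun _ _ _ => Iff.rfl
  letI : Semigroup (Ultrafilter ℤ) :=
    { mul_assoc := fun U V W => Ultrafilter.coe_inj.mp <| Filter.ext' fun p => by
        simp only [hev, opP_assoc hv.k01] }
  have hmem : ∀ (U V : Ultrafilter ℤ) (S : Set ℤ),
      S ∈ U * V ↔ {a | {b | opP l k a b ∈ S} ∈ V} ∈ U :=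
    fun U V S => hev U V (· ∈ S)
  have hcont : ∀ W : Ultrafilter ℤ, Continuous (· * W) := fun W =>
    ultrafilterBasis_is_basis.continuous_iff.2 <| Set.forall_mem_range.mpr fun s =>
      ultrafilter_isOpen_basic { a : ℤ | ∀ᶠ b in ↑W, opP l k a b ∈ s }
  have hclosed : IsClosed {U : Ultrafilter ℤ | inClub U} := by
    have : {U : Ultrafilter ℤ | inClub U}
        = ⋂ (N : ℕ), ⋂ (nb : ℕ), ⋂ (_ : 0 < N), ⋂ (_ : 0 < nb),
            {U : Ultrafilter ℤ | Mset N nb ∈ U} := by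
      ext U
      simp only [Set.mem_iInter, Set.mem_setOf_eq]
      exact ⟨fun h N nb hN hnb => h N nb hN hnb, fun h N nb hN hnb => h N nb hN hnb⟩
    rw [this]
    exact isClosed_iInter fun N => isClosed_iInter fun nb => isClosed_iInter fun _ =>
      isClosed_iInter fun _ => ultrafilter_isClosed_basic _
  obtain ⟨U, hUclub, hUidem⟩ :=
    exists_idempotent_in_compact_subsemigroup hcont {U : Ultrafilter ℤ | inClub U}
      exists_club hclosed.isCompact
      (by
        intro U hU V hV N nb hN hnb
        rw [hmem]
        refine Filter.mem_of_superset (hU N nb hN hnb) ?_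
        intro a ha
        refine Filter.mem_of_superset (hV N nb hN hnb) ?_
        intro b hb
        exact opP_Mset hv hN hnb ha hb)
  refine ⟨U, hUclub, fun S => ?_⟩
  have h2 := hmem U U S
  rw [hUidem] at h2
  exact h2

noncomputable def Upick (l k : ℤ) : Ultrafilter ℤ :=
  @dite _ (∃ U : Ultrafilter ℤ, inClub U ∧ isIdem (opP l k) U) (Classical.dec _)
    (fun h => h.choose) (fun _ => (pure 0 : Ultrafilter ℤ))

lemma Upick_spec {l k : ℤ} (hv : validP l k) :
    inClub (Upick l k) ∧ isIdem (opP l k) (Upick l k) := by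
  rw [Upick, dif_pos (exists_idem_club hv)]
  exact (exists_idem_club hv).choose_spec

/-- the Galvin–Glazer star set -/
def starSet (o : ℤ → ℤ → ℤ) (U : Ultrafilter ℤ) (B : Set ℤ) : Set ℤ :=
  {a | a ∈ B ∧ {b | o a b ∈ B} ∈ U}

lemma starSet_subset (o : ℤ → ℤ → ℤ) (U : Ultrafilter ℤ) (B : Set ℤ) :
    starSet o U B ⊆ B := fun _ ha => ha.1

lemma starSet_mem {o : ℤ → ℤ → ℤ} {U : Ultrafilter ℤ} (hI : isIdem o U) {B : Set ℤ}
    (hB : B ∈ U) : starSet o U B ∈ U := by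
  have h1 : {a | {b | o a b ∈ B} ∈ U} ∈ U := (hI B).mp hB
  exact Filter.inter_mem hB h1

lemma starSet_mem_iff {o : ℤ → ℤ → ℤ} {U : Ultrafilter ℤ} (hI : isIdem o U) {B : Set ℤ} :
    starSet o U B ∈ U ↔ B ∈ U :=
  ⟨fun h => Filter.mem_of_superset h (starSet_subset o U B), starSet_mem hI⟩

lemma starSet_step {o : ℤ → ℤ → ℤ} (ho : ∀ a b c, o (o a b) c = o a (o b c))
    {U : Ultrafilter ℤ} (hI : isIdem o U) {B : Set ℤ} {a : ℤ}
    (ha : a ∈ starSet o U B) : {b | o a b ∈ starSet o U B} ∈ U := by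
  obtain ⟨haB, haU⟩ := ha
  have hE : {c | {b | o c b ∈ {b | o a b ∈ B}} ∈ U} ∈ U := (hI _).mp haU
  refine Filter.mem_of_superset (Filter.inter_mem haU hE) ?_
  rintro b ⟨hb1, hb2⟩
  refine ⟨hb1, ?_⟩
  have : {b_1 | o b b_1 ∈ {b_2 | o a b_2 ∈ B}} = {b_1 | o (o a b) b_1 ∈ B} := by
    ext c; simp [Set.mem_setOf_eq, ho]
  have hb2' : {b1 | o b b1 ∈ {b2 | o a b2 ∈ B}} ∈ U := hb2
  rw [this] at hb2'
  exact hb2'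

section Tensor
variable {m : ℕ}

noncomputable def tensorFrom (U : Fin m → Ultrafilter ℤ) : ℕ → Ultrafilter (Fin m → ℤ) :=
  fun t =>
    if h : t < m then
      (U ⟨t, h⟩).bind (fun a =>
        (tensorFrom U (t + 1)).map (fun v => Function.update v ⟨t, h⟩ a))
    else pure (fun _ => 0)
  termination_by t => m - t
  decreasing_by omega

def Gdef (o : Fin m → ℤ → ℤ → ℤ) (U : Fin m → Ultrafilter ℤ) (A : Set (Fin m → ℤ)) :
    ℕ → (Fin m → ℤ) → Prop := fun t g =>
  if h : t < m then
    starSet (o ⟨t, h⟩) (U ⟨t, h⟩)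
      {a | Gdef o U A (t + 1) (Function.update g ⟨t, h⟩ a)} ∈ U ⟨t, h⟩
  else g ∈ A
  termination_by t => m - t
  decreasing_by omega

lemma tensorFrom_lt (U : Fin m → Ultrafilter ℤ) {t : ℕ} (h : t < m) :
    tensorFrom U t = (U ⟨t, h⟩).bind (fun a =>
      (tensorFrom U (t + 1)).map (fun v => Function.update v ⟨t, h⟩ a)) := by
  rw [tensorFrom, dif_pos h]

lemma tensorFrom_ge (U : Fin m → Ultrafilter ℤ) {t : ℕ} (h : ¬ t < m) :
    tensorFrom U t = pure (fun _ => 0) := by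
  rw [tensorFrom, dif_neg h]

lemma Gdef_lt {o : Fin m → ℤ → ℤ → ℤ} {U : Fin m → Ultrafilter ℤ} {A : Set (Fin m → ℤ)}
    {t : ℕ} (h : t < m) (g : Fin m → ℤ) :
    Gdef o U A t g ↔ starSet (o ⟨t, h⟩) (U ⟨t, h⟩)
      {a | Gdef o U A (t + 1) (Function.update g ⟨t, h⟩ a)} ∈ U ⟨t, h⟩ := by
  rw [Gdef, dif_pos h]

lemma Gdef_ge {o : Fin m → ℤ → ℤ → ℤ} {U : Fin m → Ultrafilter ℤ} {A : Set (Fin m → ℤ)}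
    {t : ℕ} (h : ¬ t < m) (g : Fin m → ℤ) : Gdef o U A t g ↔ g ∈ A := by
  rw [Gdef, dif_neg h]

lemma umem_bind {f : Ultrafilter ℤ} {mm : ℤ → Ultrafilter (Fin m → ℤ)}
    {s : Set (Fin m → ℤ)} : s ∈ f.bind mm ↔ {a | s ∈ mm a} ∈ f := Filter.mem_bind'

def patchF (t : ℕ) (g v : Fin m → ℤ) : Fin m → ℤ := fun j => if j.1 < t then g j else v j

lemma Gdef_iff_tensor {o : Fin m → ℤ → ℤ → ℤ} {U : Fin m → Ultrafilter ℤ}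
    (hU : ∀ j, isIdem (o j) (U j)) (A : Set (Fin m → ℤ)) :
    ∀ s t, t + s = m → ∀ g, (Gdef o U A t g ↔ {v | patchF t g v ∈ A} ∈ tensorFrom U t) := by
  intro s
  induction s with
  | zero =>
    intro t ht g
    have htm : ¬ t < m := by omega
    rw [Gdef_ge htm, tensorFrom_ge U htm, Ultrafilter.mem_pure]
    have : patchF t g (fun _ => 0) = g := by
      funext j
      have : j.1 < t := by omega
      simp [patchF, this]
    rw [Set.mem_setOf_eq, this]
  | succ s ih =>
    intro t ht g
    have htm : t < m := by omega
    rw [Gdef_lt htm, tensorFrom_lt U htm, umem_bind]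
    rw [starSet_mem_iff (hU ⟨t, htm⟩)]
    have hBeq : {a | Gdef o U A (t + 1) (Function.update g ⟨t, htm⟩ a)}
        = {a : ℤ | {v | patchF t g v ∈ A} ∈
            (tensorFrom U (t + 1)).map (fun v => Function.update v ⟨t, htm⟩ a)} := by
      ext a
      rw [Set.mem_setOf_eq, Set.mem_setOf_eq, Ultrafilter.mem_map,
        ih (t + 1) (by omega) (Function.update g ⟨t, htm⟩ a)]
      have hset : {v | patchF (t + 1) (Function.update g ⟨t, htm⟩ a) v ∈ A}
          = (fun v => Function.update v ⟨t, htm⟩ a) ⁻¹' {v | patchF t g v ∈ A} := by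
        ext v
        rw [Set.mem_preimage, Set.mem_setOf_eq, Set.mem_setOf_eq]
        have : patchF (t + 1) (Function.update g ⟨t, htm⟩ a) v
            = patchF t g (Function.update v ⟨t, htm⟩ a) := by
          funext j
          rcases lt_trichotomy j.1 t with hj | hj | hj
          · have h1 : j.1 < t + 1 := by omega
            have hne : j ≠ ⟨t, htm⟩ := by
              intro hc; rw [hc] at hj; exact absurd hj (lt_irrefl t)
            simp [patchF, hj, h1, Function.update_of_ne hne]
          · have hjeq : j = ⟨t, htm⟩ := Fin.ext hj
            subst hjeq
            simp [patchF]
          · have h1 : ¬ j.1 < t + 1 := by omega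
            have h2 : ¬ j.1 < t := by omega
            have hne : j ≠ ⟨t, htm⟩ := by
              intro hc; rw [hc] at hj; simp at hj
            simp [patchF, h1, h2, Function.update_of_ne hne]
        rw [this]
      rw [hset]
    rw [hBeq]

lemma ddagger_tensor (U : Fin m → Ultrafilter ℤ) (hU : ∀ j, inClub (U j)) :
    ∀ s t (ht : t + s = m) (Q : (Fin s → ℕ) → Prop), DDagger s Q →
      {v : Fin m → ℤ | ∃ w : Fin s → ℕ,
        (∀ i : Fin s, ((w i : ℤ) = v ⟨t + i.1, by omega⟩)) ∧ Q w} ∈ tensorFrom U t := by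
  intro s
  induction s with
  | zero =>
    intro t ht Q hQ
    rw [tensorFrom_ge U (by omega)]
    rw [Ultrafilter.mem_pure]
    exact ⟨Fin.elim0, fun i => i.elim0, hQ⟩
  | succ s ih =>
    intro t ht Q hQ
    have htm : t < m := by omega
    obtain ⟨nb, N, hnb, hN, hdd⟩ := hQ
    rw [tensorFrom_lt U htm, umem_bind]
    refine Filter.mem_of_superset (hU ⟨t, htm⟩ N nb hN hnb) ?_
    rintro a ⟨n, hn, rfl⟩
    rw [Set.mem_setOf_eq, Ultrafilter.mem_map]
    have IH := ih (t + 1) (by omega) (fun w' => Q (Fin.cons (n * N) w')) (hdd n hn)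
    refine Filter.mem_of_superset IH ?_
    rintro v ⟨w', hw', hQw⟩
    rw [Set.mem_preimage, Set.mem_setOf_eq]
    refine ⟨Fin.cons (n * N) w', ?_, hQw⟩
    intro i
    refine Fin.cases ?_ ?_ i
    · rw [Fin.cons_zero]
      have hco : (⟨t + (0 : Fin (s+1)).1, by omega⟩ : Fin m) = ⟨t, htm⟩ := by
        apply Fin.ext; simp
      rw [hco, Function.update_self]
      push_cast; ring
    · intro i'
      rw [Fin.cons_succ]
      have hne : (⟨t + (Fin.succ i').1, by omega⟩ : Fin m) ≠ ⟨t, htm⟩ := by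
        intro hc
        have hv2 : t + (Fin.succ i').1 = t := congrArg Fin.val hc
        simp [Fin.val_succ] at hv2
      rw [Function.update_of_ne hne]
      have hco : (⟨t + (Fin.succ i').1, by omega⟩ : Fin m)
          = ⟨(t + 1) + i'.1, by omega⟩ := by
        apply Fin.ext; simp [Fin.val_succ]; omega
      rw [hco]
      exact hw' i'

end Tensor
section Main
variable {m : ℕ} (l k : Fin m → ℤ) (A : Set (Fin m → ℤ))

def oF (j : Fin m) : ℤ → ℤ → ℤ := opP (l j) (k j)
noncomputable def UF (j : Fin m) : Ultrafilter ℤ := Upick (l j) (k j)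

def PVal (Z : ℕ → Fin m → ℤ) (j : Fin m) (F : Finset ℕ) : ℤ :=
  symVal (l j) (k j) (fun n => Z n j) F

def gArr (Z : ℕ → Fin m → ℤ) (t : ℕ) (σ : ℕ → Finset ℕ) : Fin m → ℤ :=
  fun j => if j.1 < t then PVal l k Z j (σ j.1) else 0

noncomputable def SSt (t : ℕ) (ht : t < m) (g : Fin m → ℤ) : Set ℤ :=
  starSet (oF l k ⟨t, ht⟩) (UF l k ⟨t, ht⟩)
    {a | Gdef (oF l k) (UF l k) A (t + 1) (Function.update g ⟨t, ht⟩ a)}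

def Adm (n t : ℕ) (σ : ℕ → Finset ℕ) : Prop :=
  (∀ i < t, (σ i).Nonempty) ∧
  (∀ i i', i < i' → i' < t → ∀ a ∈ σ i, ∀ b ∈ σ i', a < b) ∧
  (∀ i < t, ∀ a ∈ σ i, a < n)

def extF (t : ℕ) (τ : Fin t → Finset ℕ) : ℕ → Finset ℕ :=
  fun i => if h : i < t then τ ⟨i, h⟩ else ∅

noncomputable def CS (n : ℕ) (Z : ℕ → Fin m → ℤ) (j : Fin m) : Set ℤ :=
  {z | (∀ i < n, ∀ j' : Fin m, Z i j' < z) ∧ 0 < z ∧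
    (∀ τ : Fin j.1 → Finset ℕ, Adm n j.1 (extF j.1 τ) →
      z ∈ SSt l k A j.1 j.2 (gArr l k Z j.1 (extF j.1 τ))) ∧
    (∀ τ : Fin (j.1 + 1) → Finset ℕ, Adm n (j.1 + 1) (extF (j.1 + 1) τ) →
      opP (l j) (k j) (PVal l k Z j (extF (j.1 + 1) τ j.1)) z
        ∈ SSt l k A j.1 j.2 (gArr l k Z j.1 (extF (j.1 + 1) τ)))}

noncomputable def pickZ (n : ℕ) (Z : ℕ → Fin m → ℤ) (p q : ℤ) : ℤ :=
  @dite _ ((⋂ j' ∈ {j' : Fin m | l j' = p ∧ k j' = q}, CS l k A n Z j').Nonempty)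
    (Classical.dec _) (fun h => h.choose) (fun _ => 1)

noncomputable def seqZ (n : ℕ) : Fin m → ℤ := fun j =>
  pickZ l k A n (fun i => if _ : i < n then seqZ i else fun _ => 0) (l j) (k j)
  termination_by n
  decreasing_by assumption

def INVn (n : ℕ) : Prop :=
  ∀ t (ht : t < m) (σ : ℕ → Finset ℕ), Adm n (t + 1) σ →
    PVal l k (seqZ l k A) ⟨t, ht⟩ (σ t) ∈ SSt l k A t ht (gArr l k (seqZ l k A) t σ)


lemma seqZ_eq (n : ℕ) (j : Fin m) :
    seqZ l k A n j
      = pickZ l k A n (fun i => if _ : i < n then seqZ l k A i else fun _ => 0)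
          (l j) (k j) := by
  rw [seqZ]

lemma PVal_congr {Z Z' : ℕ → Fin m → ℤ} {j : Fin m} {F : Finset ℕ}
    (h : ∀ i ∈ F, Z i j = Z' i j) : PVal l k Z j F = PVal l k Z' j F :=
  symVal_congr h

lemma gArr_congr {Z Z' : ℕ → Fin m → ℤ} {t : ℕ} {σ σ' : ℕ → Finset ℕ}
    (h1 : ∀ i < t, σ i = σ' i)
    (h2 : ∀ i < t, ∀ a ∈ σ i, ∀ j : Fin m, Z a j = Z' a j) :
    gArr l k Z t σ = gArr l k Z' t σ' := by
  funext j
  unfold gArr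
  by_cases hj : j.1 < t
  · rw [if_pos hj, if_pos hj, ← h1 j.1 hj]
    exact PVal_congr l k (fun i hi => h2 j.1 hj i hi j)
  · rw [if_neg hj, if_neg hj]

lemma gArr_zero (Z : ℕ → Fin m → ℤ) (σ : ℕ → Finset ℕ) :
    gArr l k Z 0 σ = fun _ => 0 := by
  funext j; simp [gArr]

lemma gArr_succ_eq_update {Z : ℕ → Fin m → ℤ} {t : ℕ} (ht : t < m) (σ : ℕ → Finset ℕ) :
    Function.update (gArr l k Z t σ) ⟨t, ht⟩ (PVal l k Z ⟨t, ht⟩ (σ t))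
      = gArr l k Z (t + 1) σ := by
  funext j
  by_cases hj : j = ⟨t, ht⟩
  · subst hj
    rw [Function.update_self]
    show _ = if (t : ℕ) < t + 1 then _ else _
    rw [if_pos (Nat.lt_succ_self t)]
  · rw [Function.update_of_ne hj]
    have hj1 : j.1 ≠ t := fun hc => hj (Fin.ext hc)
    show (if j.1 < t then _ else _) = (if j.1 < t + 1 then _ else _)
    by_cases h2 : j.1 < t
    · rw [if_pos h2, if_pos (by omega)]
    · rw [if_neg h2, if_neg (by omega)]

lemma Gdef_gArr (hv : ∀ j, validP (l j) (k j))
    (hA : Gdef (oF l k) (UF l k) A 0 (fun _ => 0)) {n : ℕ} (hinv : INVn l k A n) :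
    ∀ t, t ≤ m → ∀ σ : ℕ → Finset ℕ, Adm n t σ →
      Gdef (oF l k) (UF l k) A t (gArr l k (seqZ l k A) t σ) := by
  intro t htm σ hσ
  cases t with
  | zero => rw [gArr_zero]; exact hA
  | succ t' =>
    have ht' : t' < m := by omega
    have hi := hinv t' ht' σ hσ
    have hbase := starSet_subset _ _ _ hi
    rw [Set.mem_setOf_eq] at hbase
    rwa [gArr_succ_eq_update l k ht' σ] at hbase

lemma adm_ext_finite (n t : ℕ) :
    {τ : Fin t → Finset ℕ | Adm n t (extF t τ)}.Finite := by
  apply Set.Finite.subset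
    (Set.Finite.pi (fun _ : Fin t => ((Finset.range n).powerset : Finset (Finset ℕ)).finite_toSet))
  intro τ hτ
  rw [Set.mem_pi]
  intro i _
  rw [Finset.mem_coe, Finset.mem_powerset]
  intro a ha
  rw [Finset.mem_range]
  refine hτ.2.2 i.1 i.2 a ?_
  show a ∈ extF t τ i.1
  rw [extF, dif_pos i.2]
  exact ha


lemma CS_mem (hv : ∀ j, validP (l j) (k j))
    (hA : Gdef (oF l k) (UF l k) A 0 (fun _ => 0)) {n : ℕ} (hinv : INVn l k A n)
    (j : Fin m) :
    CS l k A n (fun i => if _ : i < n then seqZ l k A i else fun _ => 0) j ∈ UF l k j := by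
  set Zp : ℕ → Fin m → ℤ := fun i => if _ : i < n then seqZ l k A i else fun _ => 0 with hZpdef
  have hZp : ∀ i, i < n → ∀ j', Zp i j' = seqZ l k A i j' := by
    intro i hi j'
    simp only [Zp, dif_pos hi]
  have hclub := (Upick_spec (hv j)).1
  have hidem : isIdem (opP (l j) (k j)) (UF l k j) := (Upick_spec (hv j)).2
  -- clause 0 : bigger than everything before
  have h0 : {z : ℤ | ∀ i < n, ∀ j' : Fin m, Zp i j' < z} ∈ UF l k j := by
    set c : ℕ := (Finset.range n).sup
        (fun i => Finset.univ.sup (fun j' : Fin m => (Zp i j').toNat)) with hc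
    refine Filter.mem_of_superset (hclub 1 (c + 1) one_pos (Nat.succ_pos c)) ?_
    rintro z ⟨nn, hnn, rfl⟩
    intro i hi j'
    have e1 : Zp i j' ≤ ((Zp i j').toNat : ℤ) := Int.self_le_toNat _
    have e2a : (Zp i j').toNat ≤ Finset.univ.sup (fun j'' : Fin m => (Zp i j'').toNat) :=
      Finset.le_sup (f := fun j'' : Fin m => (Zp i j'').toNat) (Finset.mem_univ j')
    have e2b : Finset.univ.sup (fun j'' : Fin m => (Zp i j'').toNat) ≤ c :=
      Finset.le_sup (f := fun i => Finset.univ.sup (fun j'' : Fin m => (Zp i j'').toNat))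
        (Finset.mem_range.mpr hi)
    have e2 := le_trans e2a e2b
    have e2' : ((Zp i j').toNat : ℤ) ≤ (c : ℤ) := by exact_mod_cast e2
    have e3 : (c : ℤ) + 1 ≤ (nn : ℤ) := by exact_mod_cast hnn
    have : ((1 : ℕ) : ℤ) = 1 := by norm_num
    rw [this, mul_one]
    linarith
  -- clause 1 : positivity
  have h1 : {z : ℤ | 0 < z} ∈ UF l k j :=
    Filter.mem_of_superset (hclub 1 1 one_pos one_pos) (fun z hz => Mset_pos one_pos one_pos hz)
  -- clause 2 : star sets for new blocks
  have h2 : {z : ℤ | ∀ τ : Fin j.1 → Finset ℕ, Adm n j.1 (extF j.1 τ) →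
      z ∈ SSt l k A j.1 j.2 (gArr l k Zp j.1 (extF j.1 τ))} ∈ UF l k j := by
    have hfin := adm_ext_finite n j.1
    have key : ∀ τ ∈ {τ : Fin j.1 → Finset ℕ | Adm n j.1 (extF j.1 τ)},
        SSt l k A j.1 j.2 (gArr l k Zp j.1 (extF j.1 τ)) ∈ UF l k j := by
      intro τ hτ
      have hg : gArr l k Zp j.1 (extF j.1 τ) = gArr l k (seqZ l k A) j.1 (extF j.1 τ) :=
        gArr_congr l k (fun i _ => rfl)
          (fun i hi a ha jj => hZp a (hτ.2.2 i hi a ha) jj)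
      rw [hg]
      have hGdef := Gdef_gArr l k A hv hA hinv j.1 (le_of_lt j.2) (extF j.1 τ) hτ
      rw [Gdef_lt j.2] at hGdef
      exact hGdef
    have heq : {z : ℤ | ∀ τ : Fin j.1 → Finset ℕ, Adm n j.1 (extF j.1 τ) →
        z ∈ SSt l k A j.1 j.2 (gArr l k Zp j.1 (extF j.1 τ))}
        = ⋂ τ ∈ {τ : Fin j.1 → Finset ℕ | Adm n j.1 (extF j.1 τ)},
            SSt l k A j.1 j.2 (gArr l k Zp j.1 (extF j.1 τ)) := by
      ext z
      simp only [Set.mem_setOf_eq, Set.mem_iInter]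
    rw [heq, ← Ultrafilter.mem_coe, Filter.biInter_mem hfin]
    exact key
  -- clause 3 : star sets for extending the current block
  have h3 : {z : ℤ | ∀ τ : Fin (j.1 + 1) → Finset ℕ, Adm n (j.1 + 1) (extF (j.1 + 1) τ) →
      opP (l j) (k j) (PVal l k Zp j (extF (j.1 + 1) τ j.1)) z
        ∈ SSt l k A j.1 j.2 (gArr l k Zp j.1 (extF (j.1 + 1) τ))} ∈ UF l k j := by
    have hfin := adm_ext_finite n (j.1 + 1)
    have key : ∀ τ ∈ {τ : Fin (j.1 + 1) → Finset ℕ | Adm n (j.1 + 1) (extF (j.1 + 1) τ)},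
        {z : ℤ | opP (l j) (k j) (PVal l k Zp j (extF (j.1 + 1) τ j.1)) z
          ∈ SSt l k A j.1 j.2 (gArr l k Zp j.1 (extF (j.1 + 1) τ))} ∈ UF l k j := by
      intro τ hτ
      have hg : gArr l k Zp j.1 (extF (j.1 + 1) τ) = gArr l k (seqZ l k A) j.1 (extF (j.1 + 1) τ) :=
        gArr_congr l k (fun i _ => rfl)
          (fun i hi a ha jj => hZp a (hτ.2.2 i (by omega) a ha) jj)
      have hPv : PVal l k Zp j (extF (j.1 + 1) τ j.1)
          = PVal l k (seqZ l k A) j (extF (j.1 + 1) τ j.1) :=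
        PVal_congr l k (fun i hi => hZp i (hτ.2.2 j.1 (Nat.lt_succ_self _) i hi) j)
      rw [hg, hPv]
      have hstar := hinv j.1 j.2 (extF (j.1 + 1) τ) hτ
      exact starSet_step (opP_assoc (hv j).k01) hidem hstar
    have heq : {z : ℤ | ∀ τ : Fin (j.1 + 1) → Finset ℕ, Adm n (j.1 + 1) (extF (j.1 + 1) τ) →
        opP (l j) (k j) (PVal l k Zp j (extF (j.1 + 1) τ j.1)) z
          ∈ SSt l k A j.1 j.2 (gArr l k Zp j.1 (extF (j.1 + 1) τ))}
        = ⋂ τ ∈ {τ : Fin (j.1 + 1) → Finset ℕ | Adm n (j.1 + 1) (extF (j.1 + 1) τ)},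
            {z : ℤ | opP (l j) (k j) (PVal l k Zp j (extF (j.1 + 1) τ j.1)) z
              ∈ SSt l k A j.1 j.2 (gArr l k Zp j.1 (extF (j.1 + 1) τ))} := by
      ext z
      simp only [Set.mem_setOf_eq, Set.mem_iInter]
    rw [heq, ← Ultrafilter.mem_coe, Filter.biInter_mem hfin]
    exact key
  have hfinal : {z : ℤ | z ∈ CS l k A n Zp j} ∈ (UF l k j : Filter ℤ) := by
    filter_upwards [h0, h1, h2, h3] with z hz0 hz1 hz2 hz3
    exact ⟨hz0, hz1, hz2, hz3⟩
  rwa [Set.setOf_mem_eq] at hfinal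

lemma seq_mem (hv : ∀ j, validP (l j) (k j))
    (hA : Gdef (oF l k) (UF l k) A 0 (fun _ => 0)) {n : ℕ} (hinv : INVn l k A n)
    (j : Fin m) :
    seqZ l k A n j
      ∈ CS l k A n (fun i => if _ : i < n then seqZ l k A i else fun _ => 0) j := by
  have hT : (⋂ j' ∈ {j' : Fin m | l j' = l j ∧ k j' = k j},
      CS l k A n (fun i => if _ : i < n then seqZ l k A i else fun _ => 0) j') ∈ UF l k j := by
    rw [← Ultrafilter.mem_coe, Filter.biInter_mem (Set.toFinite _)]
    intro j' hj'
    have hUeq : UF l k j = UF l k j' := by unfold UF; rw [hj'.1, hj'.2]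
    rw [hUeq]
    exact CS_mem l k A hv hA hinv j'
  have hne := Ultrafilter.nonempty_of_mem hT
  rw [seqZ_eq]
  unfold pickZ
  rw [dif_pos hne]
  have hspec := hne.choose_spec
  rw [Set.mem_iInter₂] at hspec
  exact hspec j ⟨rfl, rfl⟩


lemma INV_all (hv : ∀ j, validP (l j) (k j))
    (hA : Gdef (oF l k) (UF l k) A 0 (fun _ => 0)) : ∀ n, INVn l k A n := by
  intro n
  induction n using Nat.strong_induction_on with
  | _ n ih =>
    intro t ht σ hσ
    cases n with
    | zero =>
      obtain ⟨a, ha⟩ := hσ.1 t (Nat.lt_succ_self t)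
      exact absurd (hσ.2.2 t (Nat.lt_succ_self t) a ha) (Nat.not_lt_zero a)
    | succ n' =>
      have hinv' : INVn l k A n' := ih n' (Nat.lt_succ_self n')
      by_cases hmem : n' ∈ σ t
      · obtain ⟨hs0, hs1, hs2, hs3⟩ := seq_mem l k A hv hA hinv' ⟨t, ht⟩
        have hprev : ∀ i < t, ∀ a ∈ σ i, a < n' := fun i hi a ha =>
          hσ.2.1 i t hi (Nat.lt_succ_self t) a ha n' hmem
        have hZp : ∀ i, i < n' → ∀ j',
            (fun i => if _ : i < n' then seqZ l k A i else fun _ => 0) i j'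
              = seqZ l k A i j' := by
          intro i hi j'
          simp only [dif_pos hi]
        by_cases hF' : (σ t).erase n' = ∅
        · -- σ t = {n'} : start a new block
          have hsing : σ t = {n'} := by
            apply Finset.eq_singleton_iff_unique_mem.mpr
            refine ⟨hmem, fun b hb => ?_⟩
            by_contra hbne
            exact absurd (Finset.mem_erase.mpr ⟨hbne, hb⟩) (by rw [hF']; simp)
          have hadm : Adm n' t (extF t (fun i : Fin t => σ i.1)) := by
            refine ⟨?_, ?_, ?_⟩
            · intro i hi
              rw [extF, dif_pos hi]
              exact hσ.1 i (by omega)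
            · intro i i' hii' hi't a ha b hb
              rw [extF, dif_pos (lt_trans hii' hi't)] at ha
              rw [extF, dif_pos hi't] at hb
              exact hσ.2.1 i i' hii' (by omega) a ha b hb
            · intro i hi a ha
              rw [extF, dif_pos hi] at ha
              exact hprev i hi a ha
          have h2 := hs2 (fun i : Fin t => σ i.1) hadm
          have hg : gArr l k (fun i => if _ : i < n' then seqZ l k A i else fun _ => 0) t
              (extF t (fun i : Fin t => σ i.1)) = gArr l k (seqZ l k A) t σ := by
            refine gArr_congr l k (fun i hi => by rw [extF, dif_pos hi]) ?_
            intro i hi a ha jj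
            rw [extF, dif_pos hi] at ha
            exact hZp a (hprev i hi a ha) jj
          rw [hg] at h2
          have hPv : PVal l k (seqZ l k A) ⟨t, ht⟩ (σ t) = seqZ l k A n' ⟨t, ht⟩ := by
            rw [hsing]
            exact symVal_singleton (hv ⟨t, ht⟩).k01 _ n'
          rw [hPv]
          exact h2
        · -- extend the current block
          have hFne : ((σ t).erase n').Nonempty := Finset.nonempty_of_ne_empty hF'
          have hFel : ∀ a ∈ (σ t).erase n', a < n' := by
            intro a ha
            have h1 := hσ.2.2 t (Nat.lt_succ_self t) a (Finset.mem_of_mem_erase ha)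
            have h2 : a ≠ n' := Finset.ne_of_mem_erase ha
            omega
          have hadm : Adm n' (t + 1)
              (extF (t + 1) (fun i : Fin (t + 1) =>
                if i.1 < t then σ i.1 else (σ t).erase n')) := by
            refine ⟨?_, ?_, ?_⟩
            · intro i hi
              rw [extF, dif_pos hi]
              by_cases h2 : i < t
              · rw [if_pos h2]; exact hσ.1 i (by omega)
              · rw [if_neg h2]; exact hFne
            · intro i i' hii' hi't a ha b hb
              rw [extF, dif_pos (lt_trans hii' hi't)] at ha
              rw [extF, dif_pos hi't] at hb
              by_cases h2 : i' < t
              · rw [if_pos (lt_trans hii' h2)] at ha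
                rw [if_pos h2] at hb
                exact hσ.2.1 i i' hii' (by omega) a ha b hb
              · have hit : i < t := by omega
                rw [if_pos hit] at ha
                rw [if_neg h2] at hb
                exact hσ.2.1 i t hit (Nat.lt_succ_self t) a ha b (Finset.mem_of_mem_erase hb)
            · intro i hi a ha
              rw [extF, dif_pos hi] at ha
              by_cases h2 : i < t
              · rw [if_pos h2] at ha
                exact hprev i h2 a ha
              · rw [if_neg h2] at ha
                exact hFel a ha
          have h3 := hs3 (fun i : Fin (t + 1) =>
            if i.1 < t then σ i.1 else (σ t).erase n') hadm
          have hext_t : extF (t + 1) (fun i : Fin (t + 1) =>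
              if i.1 < t then σ i.1 else (σ t).erase n') t = (σ t).erase n' := by
            rw [extF, dif_pos (Nat.lt_succ_self t)]
            simp
          have hg : gArr l k (fun i => if _ : i < n' then seqZ l k A i else fun _ => 0) t
              (extF (t + 1) (fun i : Fin (t + 1) =>
                if i.1 < t then σ i.1 else (σ t).erase n'))
              = gArr l k (seqZ l k A) t σ := by
            refine gArr_congr l k ?_ ?_
            · intro i hi
              rw [extF, dif_pos (by omega : i < t + 1), if_pos hi]
            · intro i hi a ha jj
              rw [extF, dif_pos (by omega : i < t + 1), if_pos hi] at ha
              exact hZp a (hprev i hi a ha) jj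
          have hPv2 : PVal l k (fun i => if _ : i < n' then seqZ l k A i else fun _ => 0)
              ⟨t, ht⟩ ((σ t).erase n') = PVal l k (seqZ l k A) ⟨t, ht⟩ ((σ t).erase n') :=
            PVal_congr l k (fun i hi => hZp i (hFel i hi) ⟨t, ht⟩)
          rw [hext_t, hPv2, hg] at h3
          have hPv3 : PVal l k (seqZ l k A) ⟨t, ht⟩ (σ t)
              = opP (l ⟨t, ht⟩) (k ⟨t, ht⟩)
                  (PVal l k (seqZ l k A) ⟨t, ht⟩ ((σ t).erase n'))
                  (seqZ l k A n' ⟨t, ht⟩) := by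
            conv_lhs => rw [show σ t = insert n' ((σ t).erase n') from
              (Finset.insert_erase hmem).symm]
            rw [PVal, symVal_insert (hv ⟨t, ht⟩) _ (Finset.notMem_erase n' (σ t)) hFne]
            rw [opP_comm]
            rfl
          rw [hPv3]
          exact h3
      · -- n' not used : reduce the bound
        have hadm : Adm n' (t + 1) σ := by
          obtain ⟨b, hb⟩ := hσ.1 t (Nat.lt_succ_self t)
          have hbn : b < n' := by
            have h1 := hσ.2.2 t (Nat.lt_succ_self t) b hb
            have h2 : b ≠ n' := fun hc => hmem (hc ▸ hb)
            omega
          refine ⟨hσ.1, hσ.2.1, ?_⟩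
          intro i hi a ha
          rcases Nat.lt_or_ge i t with hit | hit
          · exact lt_trans (hσ.2.1 i t hit (Nat.lt_succ_self t) a ha b hb) hbn
          · have hieq : i = t := by omega
            subst hieq
            have h1 := hσ.2.2 i (Nat.lt_succ_self i) a ha
            have h2 : a ≠ n' := fun hc => hmem (hc ▸ ha)
            omega
        exact hinv' t ht σ hadm

end Main
end MT16

/-- Milliken–Taylor-type theorem for symmetric systems on the positive
integers, for pairs (ℓ_j,k_j) with ℓ_j > 0 and k_j ∈ {0,1} or (ℓ_j,k_j) = (0,1), and a
function f satisfying condition (‡). -/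
theorem milliken_taylor_type_nat (m : ℕ) (l k : Fin m → ℤ)
    (h : ∀ j, (0 < l j ∧ (k j = 0 ∨ k j = 1)) ∨ (l j = 0 ∧ k j = 1))
    (f : (Fin m → ℤ) → ℤ)
    (hf : DDagger m (fun v => 0 < f (fun j => (v j : ℤ))))
    (r : ℕ) (C : Fin r → Set ℤ) (hC : (⋃ i, C i) = {z : ℤ | 0 < z}) :
    ∃ x : Fin m → ℕ → ℤ,
      (∀ j, Function.Injective (x j)) ∧
      (∀ j n, 0 < x j n) ∧
      (∀ j j', l j = l j' → k j = k j' → x j = x j') ∧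
      ∃ i : Fin r, ∀ F : Fin m → Finset ℕ,
        (∀ j, (F j).Nonempty) →
        (∀ j j', j < j' → ∀ a ∈ F j, ∀ b ∈ F j', a < b) →
        f (fun j => symVal (l j) (k j) (x j) (F j)) ∈ C i := by
  classical
  have hv : ∀ j, MT16.validP (l j) (k j) := h
  have hUclub : ∀ j, MT16.inClub (MT16.UF l k j) := fun j => (MT16.Upick_spec (hv j)).1
  have hUidem : ∀ j, MT16.isIdem (MT16.oF l k j) (MT16.UF l k j) :=
    fun j => (MT16.Upick_spec (hv j)).2
  have hpos : {v : Fin m → ℤ | 0 < f v} ∈ MT16.tensorFrom (MT16.UF l k) 0 := by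
    have hdd := MT16.ddagger_tensor (MT16.UF l k) hUclub m 0 (by omega) _ hf
    refine Filter.mem_of_superset hdd ?_
    rintro v ⟨w, hw, hQ⟩
    have hwv : (fun j => ((w j : ℤ))) = v := by
      funext j
      have h1 := hw j
      have hco : (⟨0 + j.1, by omega⟩ : Fin m) = j := by apply Fin.ext; simp
      rwa [hco] at h1
    rw [Set.mem_setOf_eq, ← hwv]
    exact hQ
  have hsub : {v : Fin m → ℤ | 0 < f v} ⊆ ⋃ i : Fin r, f ⁻¹' (C i) := by
    intro v hv0
    have h1 : f v ∈ ⋃ i, C i := by rw [hC]; exact hv0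
    obtain ⟨i0, hfi⟩ := Set.mem_iUnion.mp h1
    exact Set.mem_iUnion.mpr ⟨i0, hfi⟩
  have hun : (⋃ i ∈ (Set.univ : Set (Fin r)), f ⁻¹' (C i)) ∈ MT16.tensorFrom (MT16.UF l k) 0 := by
    rw [Set.biUnion_univ]
    exact Filter.mem_of_superset hpos hsub
  obtain ⟨i, -, hAmem⟩ := (Ultrafilter.finite_biUnion_mem_iff Set.finite_univ).mp hun
  have hA : MT16.Gdef (MT16.oF l k) (MT16.UF l k) (f ⁻¹' (C i)) 0 (fun _ => 0) := by
    rw [MT16.Gdef_iff_tensor hUidem (f ⁻¹' (C i)) m 0 (by omega)]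
    have he : {v : Fin m → ℤ | MT16.patchF 0 (fun _ => 0) v ∈ f ⁻¹' (C i)} = f ⁻¹' (C i) := by
      ext v
      have hp : MT16.patchF 0 (fun _ => (0:ℤ)) v = v := by
        funext j; simp [MT16.patchF]
      rw [Set.mem_setOf_eq, hp]
    rw [he]
    exact hAmem
  have hINV := MT16.INV_all l k (f ⁻¹' (C i)) hv hA
  refine ⟨fun j n => MT16.seqZ l k (f ⁻¹' (C i)) n j, ?_, ?_, ?_, i, ?_⟩
  · intro j
    have hmono : StrictMono (fun n => MT16.seqZ l k (f ⁻¹' (C i)) n j) := by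
      intro a b hab
      have hs := (MT16.seq_mem l k (f ⁻¹' (C i)) hv hA (hINV b) j).1
      have h1 := hs a hab j
      simpa [dif_pos hab] using h1
    exact hmono.injective
  · intro j n
    exact (MT16.seq_mem l k (f ⁻¹' (C i)) hv hA (hINV n) j).2.1
  · intro j j' hl hk
    funext n
    show MT16.seqZ l k (f ⁻¹' (C i)) n j = MT16.seqZ l k (f ⁻¹' (C i)) n j'
    rw [MT16.seqZ_eq, MT16.seqZ_eq, hl, hk]
  · intro F hFne hord
    set nn := (Finset.univ.sup (fun j => (F j).sup id)) + 1 with hnn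
    have hbound : ∀ j : Fin m, ∀ a ∈ F j, a < nn := by
      intro j a ha
      have h1 : a ≤ (F j).sup id := Finset.le_sup (f := id) ha
      have h2 : (F j).sup id ≤ Finset.univ.sup (fun j => (F j).sup id) :=
        Finset.le_sup (f := fun j => (F j).sup id) (Finset.mem_univ j)
      omega
    have hadm : MT16.Adm nn m (fun i' => if h : i' < m then F ⟨i', h⟩ else ∅) := by
      refine ⟨?_, ?_, ?_⟩
      · intro i' hi'
        simp only [dif_pos hi']
        exact hFne ⟨i', hi'⟩
      · intro i1 i2 h12 h2m a ha b hb
        simp only [dif_pos (lt_trans h12 h2m)] at ha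
        simp only [dif_pos h2m] at hb
        exact hord ⟨i1, lt_trans h12 h2m⟩ ⟨i2, h2m⟩ (Fin.mk_lt_mk.mpr h12) a ha b hb
      · intro i' hi' a ha
        simp only [dif_pos hi'] at ha
        exact hbound ⟨i', hi'⟩ a ha
    have hG := MT16.Gdef_gArr l k (f ⁻¹' (C i)) hv hA (hINV nn) m le_rfl _ hadm
    rw [MT16.Gdef_ge (lt_irrefl m)] at hG
    have hgA : MT16.gArr l k (MT16.seqZ l k (f ⁻¹' (C i))) m
        (fun i' => if h : i' < m then F ⟨i', h⟩ else ∅)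
        = fun j => symVal (l j) (k j) (fun n => MT16.seqZ l k (f ⁻¹' (C i)) n j) (F j) := by
      funext j
      show (if j.1 < m then MT16.PVal l k (MT16.seqZ l k (f ⁻¹' (C i))) j
        ((fun i' => if h : i' < m then F ⟨i', h⟩ else ∅) j.1) else 0) = _
      rw [if_pos j.2]
      have hσ : (fun i' => if h : i' < m then F ⟨i', h⟩ else ∅) j.1 = F j := by
        simp only [dif_pos j.2]
      rw [hσ, MT16.PVal]
    rw [hgA] at hG
    exact hG
end

section
/- Let P ∈ ℝ[z_1,…,z_m] be a polynomial in m variables with positive leading coefficient with respect to the anti-lexicographic order on multi-indices. Then: there exists x̄_1 such that for all x_1 ≥ x̄_1, there exists x̄_2 (depending on x_1) such that for all x_2 ≥ x̄_2, …, there exists x̄_m (depending on x_1,…,x_{m−1}) such that for all x_m ≥ x̄_m, one has P(x_1, x_2, …, x_m) > 0. -/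
/-- The anti-lexicographic (strict) order on multi-indices: α < β iff α_i < β_i where
i = max{j : α_j ≠ β_j}; equivalently, α_i < β_i for some i with α_j = β_j for all j > i. -/
def AntiLexLT {m : ℕ} (a b : Fin m →₀ ℕ) : Prop :=
  ∃ i : Fin m, a i < b i ∧ ∀ j : Fin m, i < j → a j = b j

/-- The alternating quantifier string over the reals:
∃ x̄₁ ∀ x₁ ≥ x̄₁ ∃ x̄₂ ∀ x₂ ≥ x̄₂ … ∃ x̄_m ∀ x_m ≥ x̄_m, Q(x₁,…,x_m). -/
def AltQuantReal : (m : ℕ) → ((Fin m → ℝ) → Prop) → Prop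
  | 0, Q => Q Fin.elim0
  | m + 1, Q => ∃ xbar : ℝ, ∀ x : ℝ, xbar ≤ x → AltQuantReal m (fun v => Q (Fin.cons x v))

open MvPolynomial Finsupp Filter in
/-- Pushing an anti-lex inequality down to the tails. -/
lemma antiLexLT_tail {m : ℕ} {a b : Fin (m + 1) →₀ ℕ} (h : AntiLexLT a b)
    (hne : Finsupp.tail a ≠ Finsupp.tail b) : AntiLexLT (Finsupp.tail a) (Finsupp.tail b) := by
  obtain ⟨j, hj, hjk⟩ := h
  rcases Fin.eq_zero_or_eq_succ j with rfl | ⟨i, rfl⟩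
  · exact absurd (Finsupp.ext fun k => by
      simpa [Finsupp.tail_apply] using hjk k.succ (Fin.succ_pos k)) hne
  · refine ⟨i, by simpa [Finsupp.tail_apply] using hj, fun l hl => ?_⟩
    simpa [Finsupp.tail_apply] using hjk l.succ (by simpa [Fin.succ_lt_succ_iff] using hl)

open Polynomial in
/-- A real univariate polynomial whose coefficient at `d` is positive and whose coefficients
above `d` vanish is eventually positive. -/
lemma eventually_pos_of_coeff {q : Polynomial ℝ} {d : ℕ} (hpos : 0 < q.coeff d)
    (htop : ∀ k, d < k → q.coeff k = 0) : ∀ᶠ x in Filter.atTop, 0 < q.eval x := by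
  have hq0 : q ≠ 0 := fun h => by simp [h] at hpos
  have hdeg : q.natDegree = d := by
    apply le_antisymm
    · by_contra h
      push_neg at h
      exact (q.coeff_ne_zero_of_eq_degree (Polynomial.degree_eq_natDegree hq0))
        (htop _ h) |>.elim
    · exact Polynomial.le_natDegree_of_ne_zero hpos.ne'
  rcases Nat.eq_zero_or_pos d with rfl | hd
  · have : q = Polynomial.C (q.coeff 0) := Polynomial.eq_C_of_natDegree_eq_zero hdeg
    refine Filter.Eventually.of_forall fun x => ?_
    rw [this]; simpa using hpos
  · have hlc : 0 < q.leadingCoeff := by rwa [Polynomial.leadingCoeff, hdeg]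
    have hdeg' : 0 < q.degree := by
      rw [Polynomial.degree_eq_natDegree hq0, hdeg]; exact_mod_cast hd
    exact (Polynomial.tendsto_atTop_of_leadingCoeff_nonneg q hdeg' hlc.le).eventually_gt_atTop 0

open MvPolynomial Finsupp in
/-- If P ∈ ℝ[z₁,…,z_m] has positive leading coefficient with respect to the
anti-lexicographic order on multi-indices, then
∃ x̄₁ ∀ x₁ ≥ x̄₁ … ∃ x̄_m ∀ x_m ≥ x̄_m, P(x₁,…,x_m) > 0. -/
theorem poly_positive_leading_eventually_pos (m : ℕ) (P : MvPolynomial (Fin m) ℝ)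
    (hlead : ∃ α ∈ P.support, 0 < P.coeff α ∧ ∀ β ∈ P.support, β ≠ α → AntiLexLT β α) :
    AltQuantReal m (fun v => 0 < MvPolynomial.eval v P) := by
  induction m with
  | zero =>
    obtain ⟨α, hαs, hαpos, -⟩ := hlead
    show 0 < MvPolynomial.eval Fin.elim0 P
    rw [MvPolynomial.eval_eq]
    have : P.support = {α} := by
      apply Finset.eq_singleton_iff_unique_mem.mpr
      exact ⟨hαs, fun d _ => Subsingleton.elim d α⟩
    rw [this, Finset.sum_singleton, Finset.prod_of_isEmpty, mul_one]
    exact hαpos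
  | succ n ih =>
    obtain ⟨α, hαs, hαpos, hαmax⟩ := hlead
    set f := MvPolynomial.finSuccEquiv ℝ n P with hf
    -- the univariate polynomial recording the coefficient of a tail multi-index γ
    set N := f.natDegree + 1 with hN
    set q : (Fin n →₀ ℕ) → Polynomial ℝ := fun γ =>
      ∑ i ∈ Finset.range N, Polynomial.C (P.coeff (γ.cons i)) * Polynomial.X ^ i with hqdef
    -- substituting x for the first variable
    set g : ℝ → MvPolynomial (Fin n) ℝ := fun x => f.eval (MvPolynomial.C x) with hg
    have hgcoeff : ∀ (x : ℝ) (γ : Fin n →₀ ℕ),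
        (g x).coeff γ = (q γ).eval x := by
      intro x γ
      show MvPolynomial.coeff γ (f.eval (MvPolynomial.C x)) = (q γ).eval x
      conv_lhs => rw [Polynomial.eval_eq_sum_range, ← hN]
      rw [MvPolynomial.coeff_sum]
      simp only [hqdef, Polynomial.eval_finset_sum, Polynomial.eval_mul, Polynomial.eval_C,
        Polynomial.eval_pow, Polynomial.eval_X]
      refine Finset.sum_congr rfl fun i _ => ?_
      rw [← MvPolynomial.C_pow, mul_comm, MvPolynomial.coeff_C_mul,
        MvPolynomial.finSuccEquiv_coeff_coeff]
      ring
    have hgev : ∀ (x : ℝ) (v : Fin n → ℝ),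
        MvPolynomial.eval (Fin.cons x v) P = MvPolynomial.eval v (g x) := by
      intro x v
      rw [MvPolynomial.eval_eq_eval_mv_eval', Polynomial.eval_map]
      show Polynomial.eval₂ (MvPolynomial.eval v) x f
          = MvPolynomial.eval v (f.eval (MvPolynomial.C x))
      rw [Polynomial.eval, Polynomial.hom_eval₂]
      simp
    -- the key univariate polynomial for the leading tail
    have hcons_tail : (Finsupp.tail α).cons (α 0) = α := Finsupp.cons_tail α
    have hα0N : α 0 < N := by
      have : f.coeff (α 0) ≠ 0 := by
        intro h
        have := MvPolynomial.finSuccEquiv_coeff_coeff (Finsupp.tail α) P (α 0)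
        rw [← hf, h, hcons_tail] at this
        simp only [MvPolynomial.coeff_zero] at this
        exact (MvPolynomial.mem_support_iff.mp hαs) this.symm
      exact Nat.lt_succ_of_le (Polynomial.le_natDegree_of_ne_zero this)
    have hqcoeff : ∀ γ k, (q γ).coeff k = if k < N then P.coeff (γ.cons k) else 0 := by
      intro γ k
      rw [hqdef]
      simp only [Polynomial.finset_sum_coeff, Polynomial.coeff_C_mul, Polynomial.coeff_X_pow,
        mul_ite, mul_one, mul_zero]
      rw [Finset.sum_ite_eq (Finset.range N) k (fun i => P.coeff (γ.cons i))]
      simp [Finset.mem_range]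
    -- coefficients of q (tail α) above α 0 vanish
    have htopzero : ∀ k, α 0 < k → P.coeff ((Finsupp.tail α).cons k) = 0 := by
      intro k hk
      by_contra h
      have hmem : (Finsupp.tail α).cons k ∈ P.support := MvPolynomial.mem_support_iff.mpr h
      have hne : (Finsupp.tail α).cons k ≠ α := by
        intro he
        have : k = α 0 := by rw [← he]; simp [Finsupp.cons_zero]
        omega
      obtain ⟨j, hj, hjk⟩ := hαmax _ hmem hne
      rcases Fin.eq_zero_or_eq_succ j with rfl | ⟨i, rfl⟩
      · rw [Finsupp.cons_zero] at hj; omega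
      · rw [Finsupp.cons_succ, Finsupp.tail_apply] at hj
        exact lt_irrefl _ hj
    have hqlead : ∀ᶠ x in Filter.atTop, 0 < (q (Finsupp.tail α)).eval x := by
      apply eventually_pos_of_coeff (d := α 0)
      · rw [hqcoeff, if_pos hα0N, hcons_tail]; exact hαpos
      · intro k hk
        rw [hqcoeff]
        split
        · exact htopzero k hk
        · rfl
    obtain ⟨x₀, hx₀⟩ := Filter.eventually_atTop.mp hqlead
    refine ⟨x₀, fun x hx => ?_⟩
    have hmain : ∀ v, MvPolynomial.eval (Fin.cons x v) P = MvPolynomial.eval v (g x) := hgev x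
    have hconv : AltQuantReal n (fun v => 0 < MvPolynomial.eval v (g x)) := by
      apply ih
      refine ⟨Finsupp.tail α, ?_, ?_, ?_⟩
      · rw [MvPolynomial.mem_support_iff, hgcoeff]
        exact (hx₀ x hx).ne'
      · rw [hgcoeff]; exact hx₀ x hx
      · intro γ hγ hγne
        have hγc : (g x).coeff γ ≠ 0 := MvPolynomial.mem_support_iff.mp hγ
        -- some lift of γ is in the support of P
        have : ∃ i, P.coeff (γ.cons i) ≠ 0 := by
          by_contra h
          push_neg at h
          apply hγc
          rw [hgcoeff, hqdef]
          simp only [h, map_zero, zero_mul]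
          simp
        obtain ⟨i, hi⟩ := this
        have hβs : γ.cons i ∈ P.support := MvPolynomial.mem_support_iff.mpr hi
        have hβne : γ.cons i ≠ α := by
          intro he
          apply hγne
          rw [← he, Finsupp.tail_cons]
        have := antiLexLT_tail (hαmax _ hβs hβne) ?_
        · rwa [Finsupp.tail_cons] at this
        · rw [Finsupp.tail_cons]; exact hγne
    -- transport along hmain
    have : AltQuantReal n (fun v => 0 < MvPolynomial.eval (Fin.cons x v) P) := by
      convert hconv using 2 with v
      rw [hmain]
    exact this
end
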